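/- arXiv:2402.07058 — 6 statements merged into one kernel-verified Lean document; each statement's English description precedes it below -/
import Mathlib

section
/- Let X_1,…,X_d be Bernoulli random variables with parameters p_1,…,p_d that are pairwise independent, and let Z = Σ_i X_i. Let X̃_1,…,X̃_d be mutually independent Bernoullis with the same parameters, and Z̃ = Σ_i X̃_i. Then P(Z > 0) ≥ (1/2)·P(Z̃ > 0). -/
open MeasureTheory ProbabilityTheory Set

lemma aux_integrable_of_bdd {Ω : Type*} [MeasurableSpace Ω] {μ : Measure Ω}
    [IsFiniteMeasure μ] {f : Ω → ℝ} (hf : Measurable f) (h : ∀ ω, ‖f ω‖ ≤ 1) :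
    Integrable f μ :=
  ⟨hf.aestronglyMeasurable, HasFiniteIntegral.of_bounded (C := 1) (Filter.Eventually.of_forall h)⟩

/-- Pairwise independent Bernoullis: P(Z>0) ≥ (1/2) P(Z̃>0) where Z̃ is the
mutually independent version with the same parameters. -/
theorem stmt0 {Ω Ω' : Type*} [MeasurableSpace Ω] [MeasurableSpace Ω']
    (μ : Measure Ω) (ν : Measure Ω') [IsProbabilityMeasure μ] [IsProbabilityMeasure ν]
    (d : ℕ) (p : Fin d → ℝ)
    (X : Fin d → Ω → ℝ) (Xt : Fin d → Ω' → ℝ)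
    (hXmeas : ∀ i, Measurable (X i)) (hXtmeas : ∀ i, Measurable (Xt i))
    (hX01 : ∀ i ω, X i ω = 0 ∨ X i ω = 1)
    (hXt01 : ∀ i ω, Xt i ω = 0 ∨ Xt i ω = 1)
    (hXmean : ∀ i, ∫ ω, X i ω ∂μ = p i)
    (hXtmean : ∀ i, ∫ ω, Xt i ω ∂ν = p i)
    (hpair : ∀ i j, i ≠ j → ∫ ω, X i ω * X j ω ∂μ = p i * p j)
    (hindep : iIndepFun Xt ν) :
    (1 / 2) * (ν {ω | 0 < ∑ i, Xt i ω}).toReal ≤ (μ {ω | 0 < ∑ i, X i ω}).toReal := by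
  classical
  set S := ∑ i, p i with hSdef
  -- pointwise bounds
  have hXnn : ∀ i ω, 0 ≤ X i ω := fun i ω => by rcases hX01 i ω with h | h <;> simp [h]
  have hXle : ∀ i ω, X i ω ≤ 1 := fun i ω => by rcases hX01 i ω with h | h <;> simp [h]
  have hXtnn : ∀ i ω, 0 ≤ Xt i ω := fun i ω => by rcases hXt01 i ω with h | h <;> simp [h]
  have hXtle : ∀ i ω, Xt i ω ≤ 1 := fun i ω => by rcases hXt01 i ω with h | h <;> simp [h]
  have hpnn : ∀ i, 0 ≤ p i := fun i => by
    rw [← hXmean i]; exact integral_nonneg fun ω => hXnn i ω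
  have hSnn : 0 ≤ S := Finset.sum_nonneg fun i _ => hpnn i
  -- integrability
  have hXint : ∀ i, Integrable (X i) μ := fun i =>
    aux_integrable_of_bdd (hXmeas i) fun ω => by
      rw [Real.norm_eq_abs, abs_of_nonneg (hXnn i ω)]; exact hXle i ω
  have hXtint : ∀ i, Integrable (Xt i) ν := fun i =>
    aux_integrable_of_bdd (hXtmeas i) fun ω => by
      rw [Real.norm_eq_abs, abs_of_nonneg (hXtnn i ω)]; exact hXtle i ω
  have hXXint : ∀ i j, Integrable (fun ω => X i ω * X j ω) μ := fun i j =>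
    aux_integrable_of_bdd ((hXmeas i).mul (hXmeas j)) fun ω => by
      rw [Real.norm_eq_abs, abs_of_nonneg (mul_nonneg (hXnn i ω) (hXnn j ω))]
      exact mul_le_one₀ (hXle i ω) (hXnn j ω) (hXle j ω)
  set Z : Ω → ℝ := fun ω => ∑ i, X i ω with hZdef
  have hZmeas : Measurable Z := Finset.measurable_sum _ fun i _ => hXmeas i
  have hZint : Integrable Z μ := integrable_finset_sum _ fun i _ => hXint i
  have hZnn : ∀ ω, 0 ≤ Z ω := fun ω => Finset.sum_nonneg fun i _ => hXnn i ω
  have hEZ : ∫ ω, Z ω ∂μ = S := by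
    rw [hZdef]
    rw [integral_finset_sum _ fun i _ => hXint i]
    simp [hXmean, hSdef]
  -- second moment
  have hZsqint : Integrable (fun ω => Z ω * Z ω) μ := by
    have : (fun ω => Z ω * Z ω) = fun ω => ∑ i, ∑ j, X i ω * X j ω := by
      funext ω; rw [hZdef]; rw [Finset.sum_mul_sum]
    rw [this]
    exact integrable_finset_sum _ fun i _ => integrable_finset_sum _ fun j _ => hXXint i j
  have hEZsq : ∫ ω, Z ω * Z ω ∂μ ≤ S + S * S := by
    have hsq : ∫ ω, Z ω * Z ω ∂μ = ∑ i, ∑ j, ∫ ω, X i ω * X j ω ∂μ := by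
      have : (fun ω => Z ω * Z ω) = fun ω => ∑ i, ∑ j, X i ω * X j ω := by
        funext ω; rw [hZdef]; rw [Finset.sum_mul_sum]
      rw [this, integral_finset_sum _ fun i _ => integrable_finset_sum _ fun j _ => hXXint i j]
      exact Finset.sum_congr rfl fun i _ => integral_finset_sum _ fun j _ => hXXint i j
    rw [hsq]
    have hterm : ∀ i j : Fin d, ∫ ω, X i ω * X j ω ∂μ
        ≤ p i * p j + (if i = j then p i else 0) := by
      intro i j
      by_cases hij : i = j
      · subst hij
        have : (fun ω => X i ω * X i ω) = X i := by
          funext ω; rcases hX01 i ω with h | h <;> simp [h]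
        rw [this, hXmean i]
        simp
        nlinarith [hpnn i]
      · rw [hpair i j hij]; simp [hij]
    calc ∑ i, ∑ j, ∫ ω, X i ω * X j ω ∂μ
        ≤ ∑ i, ∑ j, (p i * p j + (if i = j then p i else 0)) :=
          Finset.sum_le_sum fun i _ => Finset.sum_le_sum fun j _ => hterm i j
      _ = S + S * S := by
          have hrow : ∀ i : Fin d, ∑ j, (p i * p j + (if i = j then p i else 0))
              = p i * S + p i := by
            intro i
            rw [Finset.sum_add_distrib, ← Finset.mul_sum, ← hSdef, Finset.sum_ite_eq]
            simp
          rw [Finset.sum_congr rfl fun i _ => hrow i, Finset.sum_add_distrib,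
            ← Finset.sum_mul, ← hSdef]
          ring
  -- set A
  set A : Set Ω := {ω | 0 < ∑ i, X i ω} with hAdef
  have hAmeas : MeasurableSet A := measurableSet_lt measurable_const hZmeas
  set a : ℝ := 1 / (1 + S) with hadef
  have ha1S : 0 < 1 + S := by linarith
  have hann : 0 < a := by positivity
  -- pointwise inequality
  have hpt : ∀ ω, 2 * a * Z ω - a * a * (Z ω * Z ω) ≤ A.indicator (fun _ => (1:ℝ)) ω := by
    intro ω
    by_cases hω : ω ∈ A
    · rw [indicator_of_mem hω]
      nlinarith [sq_nonneg (1 - a * Z ω)]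
    · rw [indicator_of_notMem hω]
      have hZ0 : Z ω = 0 := le_antisymm (not_lt.mp hω) (hZnn ω)
      rw [hZ0]; ring_nf; rfl
  have hindint : Integrable (A.indicator (fun _ => (1:ℝ))) μ :=
    (integrable_const 1).indicator hAmeas
  have hlhsint : Integrable (fun ω => 2 * a * Z ω - a * a * (Z ω * Z ω)) μ :=
    ((hZint.const_mul _).sub (hZsqint.const_mul _))
  have hmono : ∫ ω, (2 * a * Z ω - a * a * (Z ω * Z ω)) ∂μ
      ≤ ∫ ω, A.indicator (fun _ => (1:ℝ)) ω ∂μ :=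
    integral_mono hlhsint hindint hpt
  have hindval : ∫ ω, A.indicator (fun _ => (1:ℝ)) ω ∂μ = (μ A).toReal := by
    rw [integral_indicator hAmeas]; simp; rfl
  have hlhsval : ∫ ω, (2 * a * Z ω - a * a * (Z ω * Z ω)) ∂μ
      = 2 * a * S - a * a * ∫ ω, Z ω * Z ω ∂μ := by
    rw [integral_sub (hZint.const_mul _) (hZsqint.const_mul _),
      integral_const_mul, integral_const_mul, hEZ]
  have hmain : S / (1 + S) ≤ (μ A).toReal := by
    rw [← hindval]
    refine le_trans ?_ hmono
    rw [hlhsval]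
    have h1 : a * a * ∫ ω, Z ω * Z ω ∂μ ≤ a * a * (S + S * S) := by
      apply mul_le_mul_of_nonneg_left hEZsq (by positivity)
    have h2 : 2 * a * S - a * a * (S + S * S) = S / (1 + S) := by
      rw [hadef]; field_simp; ring
    linarith
  -- the ν side : T ≤ min(1, S)
  set B : Set Ω' := {ω | 0 < ∑ i, Xt i ω} with hBdef
  have hZtmeas : Measurable (fun ω => ∑ i, Xt i ω) := Finset.measurable_sum _ fun i _ => hXtmeas i
  have hBmeas : MeasurableSet B := measurableSet_lt measurable_const hZtmeas
  have hT1 : (ν B).toReal ≤ 1 := by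
    have := prob_le_one (μ := ν) (s := B)
    calc (ν B).toReal ≤ ((1 : ENNReal)).toReal := ENNReal.toReal_mono (by simp) this
      _ = 1 := by simp
  have hTS : (ν B).toReal ≤ S := by
    have hptB : ∀ ω, B.indicator (fun _ => (1:ℝ)) ω ≤ ∑ i, Xt i ω := by
      intro ω
      by_cases hω : ω ∈ B
      · rw [indicator_of_mem hω]
        have h1 : ∃ i : Fin d, Xt i ω = 1 := by
          by_contra h
          push_neg at h
          have : ∀ i : Fin d, Xt i ω = 0 := fun i => (hXt01 i ω).resolve_right (h i)
          have : (∑ i, Xt i ω) = 0 := Finset.sum_eq_zero fun i _ => this i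
          exact absurd this (ne_of_gt hω)
        obtain ⟨i, hi⟩ := h1
        calc (1:ℝ) = Xt i ω := hi.symm
          _ ≤ ∑ j, Xt j ω := Finset.single_le_sum (fun j _ => hXtnn j ω) (Finset.mem_univ i)
      · rw [indicator_of_notMem hω]
        exact Finset.sum_nonneg fun i _ => hXtnn i ω
    have := integral_mono ((integrable_const 1).indicator hBmeas)
      (integrable_finset_sum _ fun i _ => hXtint i) hptB
    rw [integral_indicator hBmeas] at this
    simp only [integral_const, smul_eq_mul, mul_one] at this
    rw [integral_finset_sum _ fun i _ => hXtint i] at this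
    simpa [hXtmean, Measure.restrict_apply_univ, hSdef, measureReal_def] using this
  -- combine
  have hfinal : (1 / 2) * (ν B).toReal ≤ S / (1 + S) := by
    rw [le_div_iff₀ ha1S]
    nlinarith [hT1, hTS, hSnn, ENNReal.toReal_nonneg (a := ν B)]
  calc (1 / 2) * (ν B).toReal ≤ S / (1 + S) := hfinal
    _ ≤ (μ A).toReal := hmain
end

section
/- Let X_1,…,X_d be Bernoulli random variables with parameters p_i satisfying negative pairwise covariance, i.e. E[X_i X_j] ≤ p_i p_j for all i ≠ j, and let X̃_1,…,X̃_d be mutually independent Bernoullis with the same parameters. Then P(Σ_i X_i > 0) ≥ (1/2)·P(Σ_i X̃_i > 0). -/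
open MeasureTheory ProbabilityTheory Set

/-- Negatively pairwise correlated Bernoullis: P(Z>0) ≥ (1/2) P(Z̃>0). -/
theorem stmt2 {Ω Ω' : Type*} [MeasurableSpace Ω] [MeasurableSpace Ω']
    (μ : Measure Ω) (ν : Measure Ω') [IsProbabilityMeasure μ] [IsProbabilityMeasure ν]
    (d : ℕ) (p : Fin d → ℝ)
    (X : Fin d → Ω → ℝ) (Xt : Fin d → Ω' → ℝ)
    (hXmeas : ∀ i, Measurable (X i)) (hXtmeas : ∀ i, Measurable (Xt i))
    (hX01 : ∀ i ω, X i ω = 0 ∨ X i ω = 1)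
    (hXt01 : ∀ i ω, Xt i ω = 0 ∨ Xt i ω = 1)
    (hXmean : ∀ i, ∫ ω, X i ω ∂μ = p i)
    (hXtmean : ∀ i, ∫ ω, Xt i ω ∂ν = p i)
    (hpair : ∀ i j, i ≠ j → ∫ ω, X i ω * X j ω ∂μ ≤ p i * p j)
    (hindep : iIndepFun Xt ν) :
    (1 / 2) * (ν {ω | 0 < ∑ i, Xt i ω}).toReal ≤ (μ {ω | 0 < ∑ i, X i ω}).toReal := by
  classical
  set s : ℝ := ∑ i, p i with hs_def
  set Z : Ω → ℝ := fun ω => ∑ i, X i ω with hZ_def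
  set Zt : Ω' → ℝ := fun ω => ∑ i, Xt i ω with hZt_def
  have hXnn : ∀ i ω, 0 ≤ X i ω := by
    intro i ω; rcases hX01 i ω with h | h <;> simp [h]
  have hXtnn : ∀ i ω, 0 ≤ Xt i ω := by
    intro i ω; rcases hXt01 i ω with h | h <;> simp [h]
  have hXle1 : ∀ i ω, X i ω ≤ 1 := by
    intro i ω; rcases hX01 i ω with h | h <;> simp [h]
  have hp_nn : ∀ i, 0 ≤ p i := by
    intro i; rw [← hXmean i]; exact integral_nonneg fun ω => hXnn i ω
  have hs_nn : 0 ≤ s := Finset.sum_nonneg fun i _ => hp_nn i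
  -- integrability
  have hXint : ∀ i, Integrable (X i) μ := by
    intro i
    refine Integrable.mono' (integrable_const 1) (hXmeas i).aestronglyMeasurable ?_
    exact ae_of_all _ fun ω => by rw [Real.norm_eq_abs, abs_of_nonneg (hXnn i ω)]; exact hXle1 i ω
  have hXtint : ∀ i, Integrable (Xt i) ν := by
    intro i
    refine Integrable.mono' (integrable_const 1) (hXtmeas i).aestronglyMeasurable ?_
    refine ae_of_all _ fun ω => ?_
    rw [Real.norm_eq_abs, abs_of_nonneg (hXtnn i ω)]
    rcases hXt01 i ω with h | h <;> simp [h]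
  have hXXint : ∀ i j, Integrable (fun ω => X i ω * X j ω) μ := by
    intro i j
    refine Integrable.mono' (integrable_const 1) (((hXmeas i).mul (hXmeas j)).aestronglyMeasurable) ?_
    refine ae_of_all _ fun ω => ?_
    rw [Real.norm_eq_abs, abs_of_nonneg (mul_nonneg (hXnn i ω) (hXnn j ω))]
    exact mul_le_one₀ (hXle1 i ω) (hXnn j ω) (hXle1 j ω)
  have hZmeas : Measurable Z := by measurability
  have hZtmeas : Measurable Zt := by measurability
  have hZnn : ∀ ω, 0 ≤ Z ω := fun ω => Finset.sum_nonneg fun i _ => hXnn i ω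
  have hZtnn : ∀ ω, 0 ≤ Zt ω := fun ω => Finset.sum_nonneg fun i _ => hXtnn i ω
  have hZint : Integrable Z μ := integrable_finset_sum _ fun i _ => hXint i
  have hZtint : Integrable Zt ν := integrable_finset_sum _ fun i _ => hXtint i
  have hEZ : ∫ ω, Z ω ∂μ = s := by
    rw [hZ_def]
    rw [integral_finset_sum _ fun i _ => hXint i]
    exact Finset.sum_congr rfl fun i _ => hXmean i
  have hEZt : ∫ ω, Zt ω ∂ν = s := by
    rw [hZt_def, integral_finset_sum _ fun i _ => hXtint i]
    exact Finset.sum_congr rfl fun i _ => hXtmean i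
  set q : ℝ := (μ {ω | 0 < Z ω}).toReal with hq_def
  set t : ℝ := (ν {ω | 0 < Zt ω}).toReal with ht_def
  have hq_nn : 0 ≤ q := ENNReal.toReal_nonneg
  have ht_nn : 0 ≤ t := ENNReal.toReal_nonneg
  -- t ≤ 1
  have ht1 : t ≤ 1 := by
    rw [ht_def]
    have := prob_le_one (μ := ν) (s := {ω | 0 < Zt ω})
    exact ENNReal.toReal_le_of_le_ofReal one_pos.le (by simpa using this)
  -- t ≤ s via Markov
  have hts : t ≤ s := by
    have hset : {ω | 0 < Zt ω} = {ω | (1:ℝ) ≤ Zt ω} := by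
      ext ω
      simp only [mem_setOf_eq]
      constructor
      · intro h
        obtain ⟨i, -, hi⟩ : ∃ i ∈ Finset.univ, Xt i ω ≠ 0 := by
          by_contra hc
          push_neg at hc
          have : Zt ω = 0 := Finset.sum_eq_zero fun i hi => hc i hi
          exact absurd this (ne_of_gt h)
        have hi1 : Xt i ω = 1 := (hXt01 i ω).resolve_left hi
        calc (1:ℝ) = Xt i ω := hi1.symm
          _ ≤ Zt ω := Finset.single_le_sum (fun j _ => hXtnn j ω) (Finset.mem_univ i)
      · intro h; linarith
    calc t = 1 * (ν {ω | (1:ℝ) ≤ Zt ω}).toReal := by rw [ht_def, hset, one_mul]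
      _ ≤ ∫ ω, Zt ω ∂ν :=
        mul_meas_ge_le_integral_of_nonneg (ae_of_all _ hZtnn) hZtint 1
      _ = s := hEZt
  -- second moment bound
  set m : ℝ := ∫ ω, Z ω ^ 2 ∂μ with hm_def
  have hZsqint : Integrable (fun ω => Z ω ^ 2) μ := by
    have : (fun ω => Z ω ^ 2) = fun ω => ∑ i, ∑ j, X i ω * X j ω := by
      funext ω
      rw [hZ_def]
      simp [sq, Finset.sum_mul_sum]
    rw [this]
    exact integrable_finset_sum _ fun i _ => integrable_finset_sum _ fun j _ => hXXint i j
  have hm_le : m ≤ s + s * s := by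
    have hexp : m = ∑ i, ∑ j, ∫ ω, X i ω * X j ω ∂μ := by
      rw [hm_def]
      have : (fun ω => Z ω ^ 2) = fun ω => ∑ i, ∑ j, X i ω * X j ω := by
        funext ω; rw [hZ_def]; simp [sq, Finset.sum_mul_sum]
      rw [this, integral_finset_sum _ fun i _ => integrable_finset_sum _ fun j _ => hXXint i j]
      exact Finset.sum_congr rfl fun i _ =>
        integral_finset_sum _ fun j _ => hXXint i j
    rw [hexp]
    have hbound : ∀ i j : Fin d, ∫ ω, X i ω * X j ω ∂μ ≤
        (if i = j then p i else p i * p j) := by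
      intro i j
      by_cases h : i = j
      · subst h
        have : (fun ω => X i ω * X i ω) = X i := by
          funext ω; rcases hX01 i ω with h | h <;> simp [h]
        rw [this, hXmean i]; simp
      · simp only [if_neg h]
        exact hpair i j h
    calc ∑ i, ∑ j, ∫ ω, X i ω * X j ω ∂μ
        ≤ ∑ i, ∑ j, (if i = j then p i else p i * p j) :=
          Finset.sum_le_sum fun i _ => Finset.sum_le_sum fun j _ => hbound i j
      _ ≤ ∑ i, ∑ j, (if i = j then p i else 0) + ∑ i, ∑ j, p i * p j := by
          rw [← Finset.sum_add_distrib]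
          refine Finset.sum_le_sum fun i _ => ?_
          rw [← Finset.sum_add_distrib]
          refine Finset.sum_le_sum fun j _ => ?_
          by_cases h : i = j
          · subst h; simp [mul_self_nonneg]
          · simp [h]
      _ = s + s * s := by
          congr 1
          · simp [hs_def]
          · rw [hs_def, Finset.sum_mul_sum]
  -- Cauchy-Schwarz: s^2 ≤ q * m
  have hCS : s * s ≤ q * m := by
    set A : Set Ω := {ω | 0 < Z ω} with hA_def
    have hA_meas : MeasurableSet A := measurableSet_lt measurable_const hZmeas
    set f : Ω → ℝ := A.indicator 1 with hf_def
    have hf01 : ∀ ω, f ω = 0 ∨ f ω = 1 := by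
      intro ω; by_cases h : ω ∈ A <;> simp [hf_def, h]
    have hfnn : ∀ ω, 0 ≤ f ω := by intro ω; rcases hf01 ω with h | h <;> simp [h]
    have hfg : ∀ ω, f ω * Z ω = Z ω := by
      intro ω
      by_cases h : ω ∈ A
      · simp [hf_def, h]
      · have : Z ω = 0 := le_antisymm (not_lt.mp h) (hZnn ω)
        simp [this]
    have hfmeas : Measurable f := (measurable_one.indicator hA_meas)
    have hfmem : MemLp f (ENNReal.ofReal 2) μ := by
      refine MemLp.of_bound hfmeas.aestronglyMeasurable 1 (ae_of_all _ fun ω => ?_)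
      rcases hf01 ω with h | h <;> simp [h]
    have hZmem : MemLp Z (ENNReal.ofReal 2) μ := by
      refine MemLp.of_bound hZmeas.aestronglyMeasurable d (ae_of_all _ fun ω => ?_)
      rw [Real.norm_eq_abs, abs_of_nonneg (hZnn ω)]
      calc Z ω ≤ ∑ _i : Fin d, (1:ℝ) := Finset.sum_le_sum fun i _ => hXle1 i ω
        _ = d := by simp
    have hCSraw := integral_mul_le_Lp_mul_Lq_of_nonneg (⟨by norm_num, by norm_num, by norm_num⟩ : Real.HolderConjugate 2 2)
      (ae_of_all _ hfnn) (ae_of_all _ hZnn) hfmem hZmem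
    have hfint : ∫ ω, f ω * Z ω ∂μ = s := by
      rw [show (fun ω => f ω * Z ω) = Z from funext hfg, hEZ]
    have hf2 : ∫ ω, f ω ^ (2:ℝ) ∂μ = q := by
      have : (fun ω => f ω ^ (2:ℝ)) = f := by
        funext ω; rcases hf01 ω with h | h <;> simp [h]
      rw [this, hf_def, integral_indicator_one hA_meas, hq_def, Measure.real]
    have hZ2 : ∫ ω, Z ω ^ (2:ℝ) ∂μ = m := by
      rw [hm_def]
      congr 1
      funext ω
      rw [← Real.rpow_natCast (Z ω) 2]
      norm_num
    rw [hfint, hf2, hZ2] at hCSraw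
    -- hCSraw : s ≤ q ^ (1/2) * m ^ (1/2)
    have hm_nn : 0 ≤ m := by
      rw [hm_def]; exact integral_nonneg fun ω => sq_nonneg _
    have : s ^ 2 ≤ (q ^ ((1:ℝ)/2) * m ^ ((1:ℝ)/2)) ^ 2 := by
      apply pow_le_pow_left₀ hs_nn hCSraw
    calc s * s = s ^ 2 := (sq s).symm
      _ ≤ (q ^ ((1:ℝ)/2) * m ^ ((1:ℝ)/2)) ^ 2 := this
      _ = q * m := by
        rw [mul_pow, ← Real.rpow_natCast (q ^ ((1:ℝ)/2)) 2, ← Real.rpow_natCast (m ^ ((1:ℝ)/2)) 2,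
          ← Real.rpow_mul hq_nn, ← Real.rpow_mul hm_nn]
        norm_num
  -- conclude
  rcases eq_or_lt_of_le hs_nn with hs0 | hs0
  · have : t ≤ 0 := by rw [← hs0] at hts; exact hts
    have ht0 : t = 0 := le_antisymm this ht_nn
    rw [ht0]; simpa using hq_nn
  · have hkey : s ≤ q * (1 + s) := by nlinarith [hm_le, hCS]
    nlinarith [mul_le_mul_of_nonneg_right ht1 hs_nn, hkey, hts, hq_nn]
end

section
/- Let X_1,…,X_d be nonnegative integrable random variables satisfying pairwise negative upper orthant dependence, i.e. P(X_i > t, X_j > t) ≤ P(X_i > t)·P(X_j > t) for all i ≠ j and all t > 0. Let X̃_1,…,X̃_d be mutually independent random variables with X̃_i equal in distribution to X_i. Then E[max_i X_i] ≥ (1/2)·E[max_i X̃_i]. -/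
open MeasureTheory ProbabilityTheory Set
open scoped ENNReal NNReal

lemma chung_erdos_min {Ω : Type*} [MeasurableSpace Ω] (μ : Measure Ω) [IsProbabilityMeasure μ]
    {d : ℕ} (A : Fin d → Set Ω) (hA : ∀ i, MeasurableSet (A i))
    (hnuod : ∀ i j, i ≠ j → μ (A i ∩ A j) ≤ μ (A i) * μ (A j)) :
    min 1 (∑ i, μ (A i)) ≤ 2 * μ (⋃ i, A i) := by
  set S : ℝ≥0∞ := ∑ i, μ (A i) with hS
  set U : Set Ω := ⋃ i, A i with hU
  have hUmeas : MeasurableSet U := MeasurableSet.iUnion hA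
  set Z : Ω → ℝ≥0∞ := fun ω => ∑ i, (A i).indicator 1 ω with hZ
  have hZmeas : Measurable Z :=
    Finset.measurable_sum _ fun i _ => measurable_one.indicator (hA i)
  have hZint : ∫⁻ ω, Z ω ∂μ = S := by
    rw [hZ, lintegral_finset_sum _ fun i _ => measurable_one.indicator (hA i)]
    simp [lintegral_indicator, hA, hS]
  have hZU : ∀ ω, (Z * (U.indicator (1 : Ω → ℝ≥0∞))) ω = Z ω := by
    intro ω
    by_cases h : ω ∈ U
    · simp [indicator_of_mem h]
    · have hz : Z ω = 0 := by
        rw [hZ]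
        refine Finset.sum_eq_zero fun i _ => ?_
        have : ω ∉ A i := fun hi => h (mem_iUnion.mpr ⟨i, hi⟩)
        simp [indicator_of_notMem this]
      simp [hz]
  have hZsq : ∀ ω, Z ω ^ (2:ℝ) = Z ω * Z ω := by
    intro ω
    rw [show (2:ℝ) = ((2:ℕ):ℝ) by norm_num, ENNReal.rpow_natCast]
    ring
  have hT : ∫⁻ ω, Z ω ^ (2:ℝ) ∂μ ≤ S + S * S := by
    have hZZ : ∀ ω, Z ω * Z ω = ∑ i, ∑ j, (A i ∩ A j).indicator 1 ω := by
      intro ω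
      rw [hZ, Finset.sum_mul_sum]
      refine Finset.sum_congr rfl fun i _ => Finset.sum_congr rfl fun j _ => ?_
      rw [Set.inter_indicator_one]; rfl
    have h1 : ∑ i : Fin d, ∑ j : Fin d, μ (A i) * μ (A j) = S * S := by
      rw [hS, Finset.sum_mul_sum]
    have h2 : (∑ i : Fin d, ∑ j : Fin d, if i = j then μ (A i) else 0) = S := by
      simp [Finset.sum_ite_eq, hS]
    calc ∫⁻ ω, Z ω ^ (2:ℝ) ∂μ = ∫⁻ ω, ∑ i, ∑ j, (A i ∩ A j).indicator 1 ω ∂μ := by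
          simp_rw [hZsq, hZZ]
      _ = ∑ i, ∑ j, μ (A i ∩ A j) := by
          rw [lintegral_finset_sum _ fun i _ => Finset.measurable_sum _ fun j _ =>
            measurable_one.indicator ((hA i).inter (hA j))]
          refine Finset.sum_congr rfl fun i _ => ?_
          rw [lintegral_finset_sum _ fun j _ => measurable_one.indicator ((hA i).inter (hA j))]
          simp [lintegral_indicator, fun j => (hA i).inter (hA j)]
      _ ≤ ∑ i, ∑ j, (μ (A i) * μ (A j) + if i = j then μ (A i) else 0) := by
          refine Finset.sum_le_sum fun i _ => Finset.sum_le_sum fun j _ => ?_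
          by_cases hij : i = j
          · subst hij
            simp only [if_pos rfl, Set.inter_self]
            exact le_add_self
          · simp only [if_neg hij, add_zero]
            exact hnuod i j hij
      _ = S * S + S := by
          simp only [Finset.sum_add_distrib]
          rw [h1, h2]
      _ = S + S * S := add_comm _ _
  -- Cauchy–Schwarz (Hölder with p = q = 2)
  have hconj : Real.HolderConjugate 2 2 := Real.HolderConjugate.two_two
  have hCS := ENNReal.lintegral_mul_le_Lp_mul_Lq μ hconj hZmeas.aemeasurable
    ((measurable_one.indicator hUmeas).aemeasurable : AEMeasurable (U.indicator 1) μ)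
  have hind2 : ∀ ω, (U.indicator (1 : Ω → ℝ≥0∞)) ω ^ (2:ℝ) = (U.indicator (1 : Ω → ℝ≥0∞)) ω := by
    intro ω
    by_cases h : ω ∈ U
    · simp [indicator_of_mem h]
    · simp [indicator_of_notMem h, ENNReal.zero_rpow_of_pos (by norm_num : (0:ℝ) < 2)]
  have hindint : ∫⁻ ω, (U.indicator (1 : Ω → ℝ≥0∞)) ω ^ (2:ℝ) ∂μ = μ U := by
    simp_rw [hind2]
    simp [lintegral_indicator, hUmeas]
  rw [lintegral_congr hZU, hZint, hindint] at hCS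
  -- hCS : S ≤ T ^ (1/2) * μ U ^ (1/2)
  have hSsq : S * S ≤ (S + S * S) * μ U := by
    have h1 : S * S ≤ ((∫⁻ ω, Z ω ^ (2:ℝ) ∂μ) ^ (1/2:ℝ) * μ U ^ (1/2:ℝ)) *
        ((∫⁻ ω, Z ω ^ (2:ℝ) ∂μ) ^ (1/2:ℝ) * μ U ^ (1/2:ℝ)) := mul_le_mul' hCS hCS
    have h2 : ((∫⁻ ω, Z ω ^ (2:ℝ) ∂μ) ^ (1/2:ℝ) * μ U ^ (1/2:ℝ)) *
        ((∫⁻ ω, Z ω ^ (2:ℝ) ∂μ) ^ (1/2:ℝ) * μ U ^ (1/2:ℝ))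
        = (∫⁻ ω, Z ω ^ (2:ℝ) ∂μ) * μ U := by
      have e : ∀ x : ℝ≥0∞, x ^ (1/2:ℝ) * x ^ (1/2:ℝ) = x := by
        intro x
        rw [← ENNReal.rpow_add_of_nonneg _ _ (by norm_num) (by norm_num)]
        norm_num
      calc _ = ((∫⁻ ω, Z ω ^ (2:ℝ) ∂μ) ^ (1/2:ℝ) * (∫⁻ ω, Z ω ^ (2:ℝ) ∂μ) ^ (1/2:ℝ)) *
            (μ U ^ (1/2:ℝ) * μ U ^ (1/2:ℝ)) := by ring
        _ = _ := by rw [e, e]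
    calc S * S ≤ _ := h1
      _ = (∫⁻ ω, Z ω ^ (2:ℝ) ∂μ) * μ U := h2
      _ ≤ (S + S * S) * μ U := mul_le_mul_left hT _
  -- conclude
  by_cases hS0 : S = 0
  · simp [hS0]
  have hSfin : S ≠ ⊤ := by
    have : S ≤ ∑ _i : Fin d, (1 : ℝ≥0∞) := Finset.sum_le_sum fun i _ => prob_le_one
    simp only [Finset.sum_const, Finset.card_univ, Fintype.card_fin, nsmul_eq_mul, mul_one] at this
    exact (this.trans_lt (ENNReal.natCast_lt_top d)).ne
  have hkey : S ≤ (1 + S) * μ U := by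
    have : S * S ≤ S * ((1 + S) * μ U) := by
      calc S * S ≤ (S + S * S) * μ U := hSsq
        _ = S * ((1 + S) * μ U) := by ring
    exact (ENNReal.mul_le_mul_iff_right hS0 hSfin).mp this
  rcases le_total S 1 with h1 | h1
  · calc min 1 S ≤ S := min_le_right _ _
      _ ≤ (1 + S) * μ U := hkey
      _ ≤ 2 * μ U := by
          refine mul_le_mul_left ?_ _
          calc (1:ℝ≥0∞) + S ≤ 1 + 1 := add_le_add_right h1 _
            _ = 2 := one_add_one_eq_two
  · have h2 : S * 1 ≤ S * (2 * μ U) := by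
      calc S * 1 = S := mul_one _
        _ ≤ (1 + S) * μ U := hkey
        _ ≤ (S + S) * μ U := mul_le_mul_left (add_le_add_left h1 _) _
        _ = S * (2 * μ U) := by ring
    have h3 : (1:ℝ≥0∞) ≤ 2 * μ U := (ENNReal.mul_le_mul_iff_right hS0 hSfin).mp h2
    exact (min_le_left _ _).trans h3

/-- Decoupling under pairwise negative upper orthant dependence:
E[max Xᵢ] ≥ (1/2) E[max X̃ᵢ]. -/
theorem stmt3 {Ω Ω' : Type*} [MeasurableSpace Ω] [MeasurableSpace Ω']
    (μ : Measure Ω) (ν : Measure Ω') [IsProbabilityMeasure μ] [IsProbabilityMeasure ν]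
    (d : ℕ) (hd : 0 < d)
    (X : Fin d → Ω → ℝ) (Xt : Fin d → Ω' → ℝ)
    (hXmeas : ∀ i, Measurable (X i)) (hXtmeas : ∀ i, Measurable (Xt i))
    (hXnonneg : ∀ i ω, 0 ≤ X i ω)
    (hXint : ∀ i, Integrable (X i) μ)
    (hpnuod : ∀ i j, i ≠ j → ∀ t : ℝ, 0 < t →
      (μ ({ω | t < X i ω} ∩ {ω | t < X j ω})).toReal ≤
        (μ {ω | t < X i ω}).toReal * (μ {ω | t < X j ω}).toReal)
    (hident : ∀ i, Measure.map (Xt i) ν = Measure.map (X i) μ)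
    (hindep : iIndepFun Xt ν) :
    (1 / 2) * ∫ ω, (⨆ i, Xt i ω) ∂ν ≤ ∫ ω, (⨆ i, X i ω) ∂μ := by
  haveI : Nonempty (Fin d) := Fin.pos_iff_nonempty.mp hd
  set i0 : Fin d := ⟨0, hd⟩ with hi0
  -- measurability of the sups
  have hMX : Measurable fun ω => ⨆ i, X i ω := by
    have he : (fun ω => ⨆ i, X i ω) = Finset.univ.sup' Finset.univ_nonempty X := by
      ext ω
      rw [Finset.sup'_apply, Finset.sup'_univ_eq_ciSup]
    rw [he]
    exact Finset.measurable_sup' Finset.univ_nonempty fun i _ => hXmeas i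
  have hMXt : Measurable fun ω => ⨆ i, Xt i ω := by
    have he : (fun ω => ⨆ i, Xt i ω) = Finset.univ.sup' Finset.univ_nonempty Xt := by
      ext ω
      rw [Finset.sup'_apply, Finset.sup'_univ_eq_ciSup]
    rw [he]
    exact Finset.measurable_sup' Finset.univ_nonempty fun i _ => hXtmeas i
  -- tail sets of the sups
  have hsetX : ∀ t : ℝ, {ω | t < ⨆ i, X i ω} = ⋃ i, {ω | t < X i ω} := by
    intro t; ext ω
    simp only [mem_setOf_eq, mem_iUnion]
    exact lt_ciSup_iff (Set.Finite.bddAbove (Set.finite_range _))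
  have hsetXt : ∀ t : ℝ, {ω | t < ⨆ i, Xt i ω} = ⋃ i, {ω | t < Xt i ω} := by
    intro t; ext ω
    simp only [mem_setOf_eq, mem_iUnion]
    exact lt_ciSup_iff (Set.Finite.bddAbove (Set.finite_range _))
  -- identical tail probabilities
  have htail : ∀ (i : Fin d) (t : ℝ), ν {ω | t < Xt i ω} = μ {ω | t < X i ω} := by
    intro i t
    have h1 : {ω | t < Xt i ω} = Xt i ⁻¹' Ioi t := rfl
    have h2 : {ω | t < X i ω} = X i ⁻¹' Ioi t := rfl
    rw [h1, h2, ← Measure.map_apply (hXtmeas i) measurableSet_Ioi, hident i,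
      Measure.map_apply (hXmeas i) measurableSet_Ioi]
  -- key pointwise tail inequality
  have hkey : ∀ t : ℝ, 0 < t →
      ν {ω | t < ⨆ i, Xt i ω} ≤ 2 * μ {ω | t < ⨆ i, X i ω} := by
    intro t ht
    have hAmeas : ∀ i, MeasurableSet {ω | t < X i ω} :=
      fun i => measurableSet_lt measurable_const (hXmeas i)
    have hnuod : ∀ i j, i ≠ j →
        μ ({ω | t < X i ω} ∩ {ω | t < X j ω}) ≤ μ {ω | t < X i ω} * μ {ω | t < X j ω} := by
      intro i j hij
      have h := hpnuod i j hij t ht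
      rw [← ENNReal.toReal_mul] at h
      exact (ENNReal.toReal_le_toReal (measure_ne_top μ _)
        (ENNReal.mul_ne_top (measure_ne_top μ _) (measure_ne_top μ _))).mp h
    have hce := chung_erdos_min μ (fun i => {ω | t < X i ω}) hAmeas hnuod
    calc ν {ω | t < ⨆ i, Xt i ω} = ν (⋃ i, {ω | t < Xt i ω}) := by rw [hsetXt t]
      _ ≤ min 1 (∑ i, μ {ω | t < X i ω}) := by
          refine le_min prob_le_one ?_
          refine (measure_iUnion_fintype_le _ _).trans (le_of_eq ?_)
          exact Finset.sum_congr rfl fun i _ => htail i t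
      _ ≤ 2 * μ (⋃ i, {ω | t < X i ω}) := hce
      _ = 2 * μ {ω | t < ⨆ i, X i ω} := by rw [hsetX t]
  -- nonnegativity a.e.
  have hXt_nn : ∀ i, 0 ≤ᵐ[ν] Xt i := by
    intro i
    have h0 : ν {ω | Xt i ω < 0} = 0 := by
      have h1 : {ω | Xt i ω < 0} = Xt i ⁻¹' Iio 0 := rfl
      rw [h1, ← Measure.map_apply (hXtmeas i) measurableSet_Iio, hident i,
        Measure.map_apply (hXmeas i) measurableSet_Iio]
      have h2 : X i ⁻¹' Iio 0 = ∅ := by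
        ext ω
        simp [not_lt.mpr (hXnonneg i ω)]
      simp [h2]
    refine (ae_iff.mpr ?_)
    convert h0 using 2
    ext ω
    simp [not_le]
  have hsupXt_nn : 0 ≤ᵐ[ν] fun ω => ⨆ i, Xt i ω := by
    filter_upwards [hXt_nn i0] with ω hω
    exact hω.trans (le_ciSup (f := fun i => Xt i ω) (Set.Finite.bddAbove (Set.finite_range _)) i0)
  have hsupX_nn : ∀ ω, 0 ≤ ⨆ i, X i ω := fun ω =>
    (hXnonneg i0 ω).trans (le_ciSup (f := fun i => X i ω) (Set.Finite.bddAbove (Set.finite_range _)) i0)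
  -- layer cake representations
  have hLν := lintegral_eq_lintegral_meas_lt ν hsupXt_nn hMXt.aemeasurable
  have hLμ := lintegral_eq_lintegral_meas_lt μ (ae_of_all μ hsupX_nn) hMX.aemeasurable
  -- comparison of the layer cake integrals
  have hmono : (∫⁻ t in Ioi (0:ℝ), ν {ω | t < ⨆ i, Xt i ω})
      ≤ 2 * ∫⁻ t in Ioi (0:ℝ), μ {ω | t < ⨆ i, X i ω} := by
    rw [← lintegral_const_mul' 2 _ (by norm_num : (2:ℝ≥0∞) ≠ ⊤)]
    refine lintegral_mono_ae ?_
    filter_upwards [ae_restrict_mem measurableSet_Ioi] with t ht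
    exact hkey t ht
  have hlin : (∫⁻ ω, ENNReal.ofReal (⨆ i, Xt i ω) ∂ν)
      ≤ 2 * ∫⁻ ω, ENNReal.ofReal (⨆ i, X i ω) ∂μ := by
    rw [hLν, hLμ]; exact hmono
  -- integrability of sup X
  have hsumint : Integrable (fun ω => ∑ i, X i ω) μ :=
    integrable_finset_sum _ fun i _ => hXint i
  have hsupX_int : Integrable (fun ω => ⨆ i, X i ω) μ := by
    refine hsumint.mono' hMX.aestronglyMeasurable (ae_of_all _ fun ω => ?_)
    rw [Real.norm_eq_abs, abs_of_nonneg (hsupX_nn ω)]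
    exact ciSup_le fun i =>
      Finset.single_le_sum (f := fun j => X j ω) (fun j _ => hXnonneg j ω) (Finset.mem_univ i)
  have hLμ_fin : (∫⁻ ω, ENNReal.ofReal (⨆ i, X i ω) ∂μ) ≠ ⊤ :=
    ((lintegral_ofReal_le_lintegral_enorm _).trans_lt hsupX_int.2).ne
  -- Bochner integrals via lintegrals
  have hIXt : ∫ ω, (⨆ i, Xt i ω) ∂ν = (∫⁻ ω, ENNReal.ofReal (⨆ i, Xt i ω) ∂ν).toReal :=
    integral_eq_lintegral_of_nonneg_ae hsupXt_nn hMXt.aestronglyMeasurable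
  have hIX : ∫ ω, (⨆ i, X i ω) ∂μ = (∫⁻ ω, ENNReal.ofReal (⨆ i, X i ω) ∂μ).toReal :=
    integral_eq_lintegral_of_nonneg_ae (ae_of_all μ hsupX_nn) hMX.aestronglyMeasurable
  rw [hIXt, hIX]
  have hfin2 : (2 * ∫⁻ ω, ENNReal.ofReal (⨆ i, X i ω) ∂μ) ≠ ⊤ :=
    ENNReal.mul_ne_top (by norm_num) hLμ_fin
  have h4 : (∫⁻ ω, ENNReal.ofReal (⨆ i, Xt i ω) ∂ν).toReal
      ≤ 2 * (∫⁻ ω, ENNReal.ofReal (⨆ i, X i ω) ∂μ).toReal := by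
    calc (∫⁻ ω, ENNReal.ofReal (⨆ i, Xt i ω) ∂ν).toReal
        ≤ (2 * ∫⁻ ω, ENNReal.ofReal (⨆ i, X i ω) ∂μ).toReal := ENNReal.toReal_mono hfin2 hlin
      _ = 2 * (∫⁻ ω, ENNReal.ofReal (⨆ i, X i ω) ∂μ).toReal := by
          rw [ENNReal.toReal_mul]; norm_num
  linarith
end

section
/- Let X_i, X_j be {0,1}-valued random variables with means p_i, p_j and joint moment r = E[X_i X_j], with p_i + p_j − 2r > 0. Then for all t ≥ 0, E[exp(t·((X_i − p_i) − (X_j − p_j)))] ≤ exp(t² / log(2/(p_i + p_j − 2r))). -/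
set_option maxHeartbeats 1600000


open MeasureTheory Set

private lemma aux_exp_poly {y : ℝ} (h0 : 0 ≤ y) (h1 : y ≤ 1) :
    |Real.exp (-y) - (1 - y + y^2/2 - y^3/6 + y^4/24 - y^5/120)| ≤ 7*y^6/4320 := by
  have hx : |(-y : ℝ)| ≤ 1 := by rwa [abs_neg, abs_of_nonneg h0]
  have h := Real.exp_bound hx (n := 6) (by norm_num)
  have hs : ∑ m ∈ Finset.range 6, (-y)^m/(m.factorial : ℝ)
      = 1 - y + y^2/2 - y^3/6 + y^4/24 - y^5/120 := by
    simp [Finset.sum_range_succ, Nat.factorial]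
    ring
  rw [hs, abs_neg, abs_of_nonneg h0] at h
  calc |Real.exp (-y) - (1 - y + y^2/2 - y^3/6 + y^4/24 - y^5/120)|
      ≤ y^6 * ((6:ℕ).succ / ((6:ℕ).factorial * 6)) := h
    _ = 7*y^6/4320 := by norm_num [Nat.factorial]; ring

private lemma aux_exp_num {c lo hi : ℝ} (hc0 : 0 ≤ c) (hc1 : c ≤ 2)
    (hlo0 : 0 ≤ 1 - c/2 + (c/2)^2/2 - (c/2)^3/6 + (c/2)^4/24 - (c/2)^5/120 - 7*(c/2)^6/4320)
    (hlo : lo ≤ (1 - c/2 + (c/2)^2/2 - (c/2)^3/6 + (c/2)^4/24 - (c/2)^5/120 - 7*(c/2)^6/4320)^2)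
    (hhi : (1 - c/2 + (c/2)^2/2 - (c/2)^3/6 + (c/2)^4/24 - (c/2)^5/120 + 7*(c/2)^6/4320)^2 ≤ hi) :
    lo ≤ Real.exp (-c) ∧ Real.exp (-c) ≤ hi := by
  have h0 : (0:ℝ) ≤ c/2 := by linarith
  have h1 : c/2 ≤ 1 := by linarith
  have hb := aux_exp_poly h0 h1
  rw [abs_le] at hb
  have hP : 1 - c/2 + (c/2)^2/2 - (c/2)^3/6 + (c/2)^4/24 - (c/2)^5/120 - 7*(c/2)^6/4320
      ≤ Real.exp (-(c/2)) := by linarith [hb.1]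
  have hQ : Real.exp (-(c/2))
      ≤ 1 - c/2 + (c/2)^2/2 - (c/2)^3/6 + (c/2)^4/24 - (c/2)^5/120 + 7*(c/2)^6/4320 := by
    linarith [hb.2]
  have hsq : Real.exp (-c) = Real.exp (-(c/2)) * Real.exp (-(c/2)) := by
    rw [← Real.exp_add]; ring_nf
  have hep := Real.exp_pos (-(c/2))
  constructor
  · calc lo ≤ _^2 := hlo
      _ ≤ Real.exp (-(c/2)) * Real.exp (-(c/2)) := by nlinarith
      _ = Real.exp (-c) := hsq.symm
  · calc Real.exp (-c) = Real.exp (-(c/2)) * Real.exp (-(c/2)) := hsq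
      _ ≤ _^2 := by nlinarith
      _ ≤ hi := hhi

private lemma aux1 (s : ℝ) (hs : 0 ≤ s) : Real.exp s - 1 - s ≤ s^2 * Real.exp s / 2 := by
  set F : ℝ → ℝ := fun x => x^2*Real.exp x/2 - Real.exp x + 1 + x with hFdef
  have hF : ∀ x : ℝ, HasDerivAt F (Real.exp x * (x + x^2/2 - 1) + 1) x := by
    intro x
    have h1 : HasDerivAt (fun x : ℝ => x^2) (2*x) x := by simpa using hasDerivAt_pow 2 x
    have h2 : HasDerivAt (fun x : ℝ => x^2*Real.exp x) (2*x*Real.exp x + x^2*Real.exp x) x :=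
      h1.mul (Real.hasDerivAt_exp x)
    have h3 := (((h2.div_const 2).sub (Real.hasDerivAt_exp x)).add_const 1).add (hasDerivAt_id x)
    convert h3 using 1
    case e'_9 => ring
    all_goals rfl
  have hmono : MonotoneOn F (Ici 0) := by
    apply monotoneOn_of_deriv_nonneg (convex_Ici 0)
    · apply Continuous.continuousOn; fun_prop
    · intro x _; exact (hF x).differentiableAt.differentiableWithinAt
    · intro x hx
      rw [(hF x).deriv]
      rw [interior_Ici] at hx
      have hx0 : (0:ℝ) < x := hx
      rcases le_or_gt 1 (x + x^2/2) with h|h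
      · nlinarith [Real.exp_pos x]
      · have h5 : 1 - x ≤ Real.exp (-x) := by linarith [Real.add_one_le_exp (-x)]
        have h6 : Real.exp x * Real.exp (-x) = 1 := by rw [← Real.exp_add]; simp
        have h7 := (Real.exp_pos x).le
        nlinarith [mul_le_mul_of_nonneg_left h5 h7, mul_nonneg h7 (sq_nonneg x)]
  have h := hmono (self_mem_Ici) (show s ∈ Ici 0 from hs) hs
  have hF0 : F 0 = 0 := by simp [hFdef]
  rw [hF0] at h
  simp only [hFdef] at h
  linarith

private lemma aux2 {u : ℝ} (h0 : 0 ≤ u) (h1 : u ≤ 1) : Real.exp u ≤ 1 + u + u^2 := by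
  have h := Real.exp_bound' h0 h1 (n := 3) (by norm_num)
  have hs : ∑ m ∈ Finset.range 3, u^m/(m.factorial : ℝ) = 1 + u + u^2/2 := by
    simp [Finset.sum_range_succ, Nat.factorial]
  rw [hs] at h
  have : u^3 ≤ u^2 := by nlinarith
  calc Real.exp u ≤ 1 + u + u^2/2 + u^3*(3+1)/((3:ℕ).factorial * 3) := h
    _ ≤ 1 + u + u^2 := by norm_num [Nat.factorial]; nlinarith

private lemma keyQ {ξ L : ℝ} (hξ0 : 0 < ξ) (hL0 : 0 < L) (hL2 : Real.log 2 ≤ L)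
    (hxe : ξ = 2 * Real.exp (-L)) :
    0 ≤ L*(1+ξ+2*ξ^2) - 2*ξ^2*L^2 + ξ - 2 := by
  have hlog2 : (0.6931:ℝ) < Real.log 2 := by
    have := Real.log_two_gt_d9; linarith
  have hQ' : 0 ≤ (L-2) + ξ*(L+1) + 2*ξ^2*L*(1-L) → 0 ≤ L*(1+ξ+2*ξ^2) - 2*ξ^2*L^2 + ξ - 2 := by
    intro h; nlinarith [h]
  apply hQ'
  rcases le_or_gt L 2 with hLle2 | hLgt2
  · -- grid case : log 2 ≤ L ≤ 2
    -- numeric exponential bounds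
    have E78 := aux_exp_num (c := (7/8:ℝ)) (lo := 0.416835) (hi := 0.416865)
      (by norm_num) (by norm_num) (by norm_num) (by norm_num) (by norm_num)
    have E1 := aux_exp_num (c := (1:ℝ)) (lo := 0.367824) (hi := 0.367886)
      (by norm_num) (by norm_num) (by norm_num) (by norm_num) (by norm_num)
    have E98 := aux_exp_num (c := (9/8:ℝ)) (lo := 0.324547) (hi := 0.324665)
      (by norm_num) (by norm_num) (by norm_num) (by norm_num) (by norm_num)
    have E54 := aux_exp_num (c := (5/4:ℝ)) (lo := 0.286320) (hi := 0.286527)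
      (by norm_num) (by norm_num) (by norm_num) (by norm_num) (by norm_num)
    have E118 := aux_exp_num (c := (11/8:ℝ)) (lo := 0.252533) (hi := 0.252878)
      (by norm_num) (by norm_num) (by norm_num) (by norm_num) (by norm_num)
    have E32 := aux_exp_num (c := (3/2:ℝ)) (lo := 0.222647) (hi := 0.223192)
      (by norm_num) (by norm_num) (by norm_num) (by norm_num) (by norm_num)
    have E138 := aux_exp_num (c := (13/8:ℝ)) (lo := 0.196181) (hi := 0.197009)
      (by norm_num) (by norm_num) (by norm_num) (by norm_num) (by norm_num)
    have E74 := aux_exp_num (c := (7/4:ℝ)) (lo := 0.172708) (hi := 0.173920)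
      (by norm_num) (by norm_num) (by norm_num) (by norm_num) (by norm_num)
    have E158 := aux_exp_num (c := (15/8:ℝ)) (lo := 0.151846) (hi := 0.153567)
      (by norm_num) (by norm_num) (by norm_num) (by norm_num) (by norm_num)
    have E2 := aux_exp_num (c := (2:ℝ)) (lo := 0.133258) (hi := 0.135636)
      (by norm_num) (by norm_num) (by norm_num) (by norm_num) (by norm_num)
    have hxl : ∀ b : ℝ, L ≤ b → 2 * Real.exp (-b) ≤ ξ := by
      intro b hb; rw [hxe]
      have : Real.exp (-b) ≤ Real.exp (-L) := Real.exp_le_exp.2 (by linarith)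
      linarith
    have hxu : ∀ a : ℝ, a ≤ L → ξ ≤ 2 * Real.exp (-a) := by
      intro a ha; rw [hxe]
      have : Real.exp (-L) ≤ Real.exp (-a) := Real.exp_le_exp.2 (by linarith)
      linarith
    have hLlb : (0.6931:ℝ) < L := by linarith
    -- helper for intervals within [1,2]
    have mid : ∀ a b ξl ξu : ℝ, 1 ≤ a → a ≤ L → L ≤ b → b ≤ 2 → ξl ≤ ξ → ξ ≤ ξu → 0 ≤ ξl →
        0 ≤ (a-2) + ξl*(a+1) - 2*ξu^2*(b*(b-1)) →
        0 ≤ (L-2) + ξ*(L+1) + 2*ξ^2*L*(1-L) := by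
      intro a b ξl ξu ha1 haL hLb hb2 hξl hξu hξl0 hnum
      have h1 : ξl*(a+1) ≤ ξ*(L+1) := by
        apply mul_le_mul hξl (by linarith) (by linarith) (by linarith)
      have h2 : ξ^2*(L*(L-1)) ≤ ξu^2*(b*(b-1)) := by
        apply mul_le_mul
        · exact pow_le_pow_left₀ hξ0.le hξu 2
        · apply mul_le_mul hLb (by linarith) (by linarith) (by linarith)
        · nlinarith
        · positivity
      nlinarith [h1, h2]
    rcases le_or_gt L (7/8) with hc | hc
    · have h1 := hxl (7/8) hc
      have h2 : 2*ξ^2*L*(1-L) ≥ 0 := by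
        apply mul_nonneg; apply mul_nonneg; positivity; linarith; linarith
      have h3 : (2*0.416835)*(0.6931+1) ≤ ξ*(L+1) := by
        apply mul_le_mul (by linarith [E78.1]) (by linarith) (by norm_num) (by nlinarith [E78.1])
      nlinarith
    rcases le_or_gt L 1 with hc2 | hc2
    · have h1 := hxl 1 hc2
      have h2 : 2*ξ^2*L*(1-L) ≥ 0 := by
        apply mul_nonneg; apply mul_nonneg; positivity; linarith; linarith
      have h3 : (2*0.367824)*((7/8)+1) ≤ ξ*(L+1) := by
        apply mul_le_mul (by linarith [E1.1]) (by linarith) (by norm_num) (by nlinarith [E1.1])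
      nlinarith
    rcases le_or_gt L (9/8) with hc3 | hc3
    · exact mid 1 (9/8) (2*0.324547) (2*0.367886) (by norm_num) hc2.le hc3 (by norm_num)
        (by linarith [E98.1, hxl (9/8) hc3]) (by linarith [E1.2, hxu 1 hc2.le]) (by norm_num) (by norm_num)
    rcases le_or_gt L (5/4) with hc4 | hc4
    · exact mid (9/8) (5/4) (2*0.286320) (2*0.324665) (by norm_num) hc3.le hc4 (by norm_num)
        (by linarith [E54.1, hxl (5/4) hc4]) (by linarith [E98.2, hxu (9/8) hc3.le]) (by norm_num) (by norm_num)
    rcases le_or_gt L (11/8) with hc5 | hc5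
    · exact mid (5/4) (11/8) (2*0.252533) (2*0.286527) (by norm_num) hc4.le hc5 (by norm_num)
        (by linarith [E118.1, hxl (11/8) hc5]) (by linarith [E54.2, hxu (5/4) hc4.le]) (by norm_num) (by norm_num)
    rcases le_or_gt L (3/2) with hc6 | hc6
    · exact mid (11/8) (3/2) (2*0.222647) (2*0.252878) (by norm_num) hc5.le hc6 (by norm_num)
        (by linarith [E32.1, hxl (3/2) hc6]) (by linarith [E118.2, hxu (11/8) hc5.le]) (by norm_num) (by norm_num)
    rcases le_or_gt L (13/8) with hc7 | hc7
    · exact mid (3/2) (13/8) (2*0.196181) (2*0.223192) (by norm_num) hc6.le hc7 (by norm_num)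
        (by linarith [E138.1, hxl (13/8) hc7]) (by linarith [E32.2, hxu (3/2) hc6.le]) (by norm_num) (by norm_num)
    rcases le_or_gt L (7/4) with hc8 | hc8
    · exact mid (13/8) (7/4) (2*0.172708) (2*0.197009) (by norm_num) hc7.le hc8 (by norm_num)
        (by linarith [E74.1, hxl (7/4) hc8]) (by linarith [E138.2, hxu (13/8) hc7.le]) (by norm_num) (by norm_num)
    rcases le_or_gt L (15/8) with hc9 | hc9
    · exact mid (7/4) (15/8) (2*0.151846) (2*0.173920) (by norm_num) hc8.le hc9 (by norm_num)
        (by linarith [E158.1, hxl (15/8) hc9]) (by linarith [E74.2, hxu (7/4) hc8.le]) (by norm_num) (by norm_num)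
    · exact mid (15/8) 2 (2*0.133258) (2*0.153567) (by norm_num) hc9.le hLle2 (by norm_num)
        (by linarith [E2.1, hxl 2 hLle2]) (by linarith [E158.2, hxu (15/8) hc9.le]) (by norm_num) (by norm_num)
  · -- L > 2
    have he1 : (2.7182818283:ℝ) < Real.exp 1 := Real.exp_one_gt_d9
    have he4 : (4:ℝ) ≤ (Real.exp 1)^2 := by nlinarith
    have hkey : ξ*(L-1)*(Real.exp 1)^2 ≤ 2 := by
      have h1 : L - 1 ≤ Real.exp (L-2) := by linarith [Real.add_one_le_exp (L-2)]
      have h2 : Real.exp (-L) * Real.exp (L-2) * (Real.exp 1)^2 = 1 := by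
        rw [show (Real.exp 1)^2 = Real.exp 2 by rw [← Real.exp_nat_mul]; norm_num]
        rw [← Real.exp_add, ← Real.exp_add, show -L + (L - 2) + 2 = 0 by ring, Real.exp_zero]
      have h3 : ξ*(L-1)*(Real.exp 1)^2 ≤ ξ*Real.exp (L-2)*(Real.exp 1)^2 := by
        apply mul_le_mul_of_nonneg_right _ (by positivity)
        exact mul_le_mul_of_nonneg_left h1 hξ0.le
      have h4 : ξ*Real.exp (L-2)*(Real.exp 1)^2 = 2 := by
        rw [hxe]; nlinarith [h2]
      linarith
    nlinarith [hkey, mul_pos hξ0 hL0, mul_nonneg (mul_nonneg hξ0.le hξ0.le) hL0.le,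
      mul_le_mul_of_nonneg_left hkey (mul_nonneg (mul_nonneg (by norm_num : (0:ℝ) ≤ 2) hξ0.le) hL0.le)]

private lemma keylem (a b t : ℝ) (ha : 0 ≤ a) (hb : 0 ≤ b) (hab1 : a + b ≤ 1)
    (habpos : 0 < a + b) (ht : 0 ≤ t) :
    Real.exp (-(t*(a-b))) * (1 - a - b + a*Real.exp t + b*Real.exp (-t))
      ≤ Real.exp (t^2 / Real.log (2/(a+b))) := by
  set ξ := a + b with hξdef
  set L := Real.log (2/ξ) with hLdef
  have h2ξ : (2:ℝ) ≤ 2/ξ := by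
    rw [le_div_iff₀ habpos]; linarith
  have hL2 : Real.log 2 ≤ L := Real.log_le_log (by norm_num) h2ξ
  have hL0 : 0 < L := lt_of_lt_of_le (Real.log_pos (by norm_num)) hL2
  have hexpL : Real.exp L = 2/ξ := Real.exp_log (by positivity)
  have hu1 : ξ * L ≤ 1 := by
    have hper : Real.log (2/ξ) ≤ (2/ξ) / Real.exp 1 := by
      have h := Real.log_le_sub_one_of_pos (x := (2/ξ)/Real.exp 1) (by positivity)
      rw [Real.log_div (by positivity) (Real.exp_ne_zero 1), Real.log_exp] at h
      linarith
    have he1 : (2:ℝ) ≤ Real.exp 1 := by linarith [Real.exp_one_gt_d9]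
    have : ξ * L ≤ ξ * ((2/ξ)/Real.exp 1) := mul_le_mul_of_nonneg_left hper (by positivity)
    have heq : ξ * ((2/ξ)/Real.exp 1) = 2/Real.exp 1 := by
      field_simp
    rw [heq] at this
    have h9 : (2:ℝ)/Real.exp 1 ≤ 1 := by
      rw [div_le_one (Real.exp_pos 1)]; linarith
    exact le_trans this h9
  have hu0 : 0 < ξ * L := mul_pos habpos hL0
  rcases le_or_gt (L*(1+ξ)) t with hT | hT
  · -- large t
    have hE1 : Real.exp (-(t*(a-b))) ≤ Real.exp (t*ξ) := by
      apply Real.exp_le_exp.2; nlinarith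
    have hA_le : 1 - a - b + a*Real.exp t + b*Real.exp (-t) ≤ (1-ξ) + ξ*Real.exp t := by
      have h1 : Real.exp (-t) ≤ Real.exp t := Real.exp_le_exp.2 (by linarith)
      have h2 : b*Real.exp (-t) ≤ b*Real.exp t := mul_le_mul_of_nonneg_left h1 hb
      simp only [hξdef]; nlinarith
    have hA_nn : 0 ≤ 1 - a - b + a*Real.exp t + b*Real.exp (-t) := by
      nlinarith [Real.exp_pos t, Real.exp_pos (-t), Real.exp_one_gt_d9,
        mul_nonneg ha (Real.exp_pos t).le, mul_nonneg hb (Real.exp_pos (-t)).le]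
    calc Real.exp (-(t*(a-b))) * (1 - a - b + a*Real.exp t + b*Real.exp (-t))
        ≤ Real.exp (t*ξ) * ((1-ξ) + ξ*Real.exp t) :=
          mul_le_mul hE1 hA_le hA_nn (Real.exp_pos _).le
      _ = (1-ξ)*Real.exp (t*ξ) + ξ*Real.exp (t*ξ + t) := by rw [Real.exp_add]; ring
      _ ≤ (1-ξ)*Real.exp (t^2/L) + ξ*Real.exp (t^2/L) := by
          have hb1 : t*ξ ≤ t^2/L := by
            rw [le_div_iff₀ hL0]; nlinarith
          have hb2 : t*ξ + t ≤ t^2/L := by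
            rw [le_div_iff₀ hL0]; nlinarith
          have g1 : Real.exp (t*ξ) ≤ Real.exp (t^2/L) := Real.exp_le_exp.2 hb1
          have g2 : Real.exp (t*ξ + t) ≤ Real.exp (t^2/L) := Real.exp_le_exp.2 hb2
          have hξ1 : ξ ≤ 1 := hab1
          nlinarith [mul_le_mul_of_nonneg_left g1 (by linarith : (0:ℝ) ≤ 1-ξ),
            mul_le_mul_of_nonneg_left g2 habpos.le]
      _ = Real.exp (t^2/L) := by ring
  · -- small t : t < L(1+ξ)
    have hsinh : 2*t ≤ Real.exp t - Real.exp (-t) := by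
      rcases ht.eq_or_lt with h|h
      · rw [← h]; norm_num
      · have := Real.self_lt_sinh_iff.2 h
        rw [Real.sinh_eq] at this; linarith
    have step1 : Real.exp (-(t*(a-b))) * (1 - a - b + a*Real.exp t + b*Real.exp (-t))
        ≤ Real.exp (ξ*(Real.exp t - 1 - t)) := by
      have h1 : 1 - a - b + a*Real.exp t + b*Real.exp (-t)
          ≤ Real.exp (a*(Real.exp t - 1) + b*(Real.exp (-t) - 1)) := by
        have := Real.add_one_le_exp (a*(Real.exp t - 1) + b*(Real.exp (-t) - 1))
        linarith
      have h2 : Real.exp (-(t*(a-b))) * (1 - a - b + a*Real.exp t + b*Real.exp (-t))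
          ≤ Real.exp (-(t*(a-b))) * Real.exp (a*(Real.exp t - 1) + b*(Real.exp (-t) - 1)) := by
        apply mul_le_mul_of_nonneg_left h1 (Real.exp_pos _).le
      rw [← Real.exp_add] at h2
      refine h2.trans (Real.exp_le_exp.2 ?_)
      have h3 : b*(Real.exp (-t) - 1 + t) ≤ b*(Real.exp t - 1 - t) := by
        apply mul_le_mul_of_nonneg_left _ hb
        linarith
      simp only [hξdef]; nlinarith
    refine step1.trans (Real.exp_le_exp.2 ?_)
    -- goal : ξ*(exp t - 1 - t) ≤ t^2/L
    rw [le_div_iff₀ hL0]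
    -- now : ξ*(exp t - 1 - t)*L ≤ t^2
    by_cases hsmall : ξ*L*Real.exp t ≤ 2
    · have h1 := aux1 t ht
      have h2 : ξ*L*(Real.exp t - 1 - t) ≤ ξ*L*(t^2*Real.exp t/2) :=
        mul_le_mul_of_nonneg_left h1 hu0.le
      have h3 : ξ*L*(t^2*Real.exp t/2) = (ξ*L*Real.exp t)*(t^2/2) := by ring
      have h4 : (ξ*L*Real.exp t)*(t^2/2) ≤ 2*(t^2/2) :=
        mul_le_mul_of_nonneg_right hsmall (by positivity)
      nlinarith
    · push_neg at hsmall
      set t1 := Real.log (2/(ξ*L)) with ht1def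
      have het1 : Real.exp t1 = 2/(ξ*L) := Real.exp_log (by positivity)
      have ht1pos : 0 ≤ t1 := by
        apply (Real.log_pos _).le
        rw [lt_div_iff₀ hu0]; linarith
      have ht1t : t1 < t := by
        have h1 : Real.exp t1 < Real.exp t := by
          rw [het1, div_lt_iff₀ hu0]; nlinarith
        exact Real.exp_lt_exp.1 h1
      set T := L*(1+ξ) with hTdef
      set g : ℝ → ℝ := fun x => x^2 - ξ*L*(Real.exp x - 1 - x) with hgdef
      have hg1 : 0 ≤ g t1 := by
        have h1 := aux1 t1 ht1pos
        have h2 : ξ*L*(Real.exp t1 - 1 - t1) ≤ ξ*L*(t1^2*Real.exp t1/2) :=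
          mul_le_mul_of_nonneg_left h1 hu0.le
        have h3 : ξ*L*Real.exp t1 = 2 := by
          rw [het1]; field_simp
        simp only [hgdef]; nlinarith
      have hgT : 0 ≤ g T := by
        have heT : Real.exp T = (2/ξ)*Real.exp (ξ*L) := by
          rw [show T = L + ξ*L by rw [hTdef]; ring, Real.exp_add, hexpL]
        have heu := aux2 hu0.le hu1
        have h3 : ξ*L*Real.exp T ≤ 2*L*(1 + ξ*L + (ξ*L)^2) := by
          rw [heT]
          have heq : ξ*L*((2/ξ)*Real.exp (ξ*L)) = 2*L*Real.exp (ξ*L) := by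
            field_simp
          rw [heq]
          apply mul_le_mul_of_nonneg_left heu (by positivity)
        have hQ := keyQ habpos hL0 hL2 (by
          rw [Real.exp_neg, hexpL]
          field_simp)
        simp only [hgdef, hTdef]
        nlinarith [mul_nonneg hL0.le hQ]
      have hconc : ConcaveOn ℝ (Icc t1 T) g := by
        apply concaveOn_of_hasDerivWithinAt2_nonpos (convex_Icc t1 T)
          (f' := fun x => 2*x - ξ*L*(Real.exp x - 1)) (f'' := fun x => 2 - ξ*L*Real.exp x)
        · apply Continuous.continuousOn; fun_prop
        · intro x _
          have h1 : HasDerivAt g (2*x - ξ*L*(Real.exp x - 1)) x := by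
            have h2 : HasDerivAt (fun x : ℝ => x^2) (2*x) x := by simpa using hasDerivAt_pow 2 x
            have h3 : HasDerivAt (fun x : ℝ => Real.exp x - 1 - x) (Real.exp x - 1) x := by
              have h5 := ((Real.hasDerivAt_exp x).sub_const 1).sub (hasDerivAt_id x)
              convert h5 using 1
              all_goals rfl
            have h4 := h2.sub (h3.const_mul (ξ*L))
            convert h4 using 1
            all_goals rfl
          exact h1.hasDerivWithinAt
        · intro x _
          have h1 : HasDerivAt (fun x : ℝ => 2*x - ξ*L*(Real.exp x - 1)) (2 - ξ*L*Real.exp x) x := by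
            have h2 : HasDerivAt (fun x : ℝ => 2*x) (2:ℝ) x := by
              simpa using (hasDerivAt_id x).const_mul (2:ℝ)
            have h3 := h2.sub (((Real.hasDerivAt_exp x).sub_const 1).const_mul (ξ*L))
            convert h3 using 1
            all_goals rfl
          exact h1.hasDerivWithinAt
        · intro x hx
          rw [interior_Icc] at hx
          have h1 : Real.exp t1 < Real.exp x := Real.exp_lt_exp.2 hx.1
          rw [het1] at h1
          rw [div_lt_iff₀ hu0] at h1
          nlinarith
      have hTt1 : t1 < T := lt_trans ht1t hT
      set θ := (t - t1)/(T - t1) with hθdef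
      have hθ0 : 0 ≤ θ := div_nonneg (by linarith) (by linarith)
      have hθ1 : θ ≤ 1 := by
        rw [hθdef, div_le_one (by linarith)]; linarith
      have hcomb := hconc.2 (left_mem_Icc.2 hTt1.le) (right_mem_Icc.2 hTt1.le)
        (by linarith : (0:ℝ) ≤ 1-θ) hθ0 (by ring)
      have ht_eq : (1-θ) • t1 + θ • T = t := by
        have hne : T - t1 ≠ 0 := sub_ne_zero.2 (ne_of_gt hTt1)
        have h : θ * (T - t1) = t - t1 := by
          rw [hθdef]; exact div_mul_cancel₀ _ hne
        simp only [smul_eq_mul]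
        nlinarith [h]
      rw [ht_eq] at hcomb
      simp only [smul_eq_mul] at hcomb
      have hgt : 0 ≤ g t := by
        have h1 : 0 ≤ (1-θ)*g t1 := mul_nonneg (by linarith) hg1
        have h2 : 0 ≤ θ*g T := mul_nonneg hθ0 hgT
        linarith
      simp only [hgdef] at hgt
      nlinarith

/-- The centered difference of two correlated Bernoullis is subgaussian:
E[exp(t((X−p)−(Y−q)))] ≤ exp(t²/log(2/(p+q−2r))). -/
theorem stmt13 {Ω : Type*} [MeasurableSpace Ω] (μ : Measure Ω) [IsProbabilityMeasure μ]
    (X Y : Ω → ℝ) (hX : Measurable X) (hY : Measurable Y)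
    (hXv : ∀ ω, X ω = 0 ∨ X ω = 1) (hYv : ∀ ω, Y ω = 0 ∨ Y ω = 1)
    (p q r : ℝ) (hp : p = ∫ ω, X ω ∂μ) (hq : q = ∫ ω, Y ω ∂μ)
    (hr : r = ∫ ω, X ω * Y ω ∂μ) (hpos : 0 < p + q - 2 * r) :
    ∀ t : ℝ, 0 ≤ t →
      ∫ ω, Real.exp (t * ((X ω - p) - (Y ω - q))) ∂μ ≤
        Real.exp (t ^ 2 / Real.log (2 / (p + q - 2 * r))) := by
  intro t ht
  -- integrability
  have hXm : Integrable X μ := by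
    apply (integrable_const (1:ℝ)).mono' hX.aestronglyMeasurable
    filter_upwards with ω
    rcases hXv ω with h|h <;> simp [h]
  have hYm : Integrable Y μ := by
    apply (integrable_const (1:ℝ)).mono' hY.aestronglyMeasurable
    filter_upwards with ω
    rcases hYv ω with h|h <;> simp [h]
  have hXYm : Integrable (fun ω => X ω * Y ω) μ := by
    apply (integrable_const (1:ℝ)).mono' (hX.mul hY).aestronglyMeasurable
    filter_upwards with ω
    rcases hXv ω with h|h <;> rcases hYv ω with h'|h' <;> simp [h, h']
  -- pointwise identity
  have hpt : ∀ ω, Real.exp (t * ((X ω - p) - (Y ω - q)))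
      = Real.exp (t*(q-p)) * (1 + (Real.exp t - 1)*X ω + (Real.exp (-t) - 1)*Y ω
          + (2 - Real.exp t - Real.exp (-t))*(X ω * Y ω)) := by
    intro ω
    rcases hXv ω with h|h <;> rcases hYv ω with h'|h' <;> rw [h, h']
    · rw [show t * ((0 - p) - (0 - q)) = t*(q-p) by ring]; ring
    · rw [show t * ((0 - p) - (1 - q)) = t*(q-p) + (-t) by ring, Real.exp_add]; ring
    · rw [show t * ((1 - p) - (0 - q)) = t*(q-p) + t by ring, Real.exp_add]; ring
    · rw [show t * ((1 - p) - (1 - q)) = t*(q-p) by ring]; ring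
  -- compute the integral
  have hInt : ∫ ω, Real.exp (t * ((X ω - p) - (Y ω - q))) ∂μ
      = Real.exp (t*(q-p)) * (1 + (Real.exp t - 1)*p + (Real.exp (-t) - 1)*q
          + (2 - Real.exp t - Real.exp (-t))*r) := by
    simp only [hpt]
    rw [integral_const_mul]
    congr 1
    have eA : ∫ ω, (1 + (Real.exp t - 1)*X ω + (Real.exp (-t) - 1)*Y ω
          + (2 - Real.exp t - Real.exp (-t))*(X ω*Y ω)) ∂μ
        = (∫ ω, (1 + (Real.exp t - 1)*X ω + (Real.exp (-t) - 1)*Y ω) ∂μ)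
          + ∫ ω, (2 - Real.exp t - Real.exp (-t))*(X ω*Y ω) ∂μ :=
      integral_add (((integrable_const 1).add (hXm.const_mul _)).add (hYm.const_mul _))
        (hXYm.const_mul _)
    have eB : ∫ ω, (1 + (Real.exp t - 1)*X ω + (Real.exp (-t) - 1)*Y ω) ∂μ
        = (∫ ω, (1 + (Real.exp t - 1)*X ω) ∂μ) + ∫ ω, (Real.exp (-t) - 1)*Y ω ∂μ :=
      integral_add ((integrable_const 1).add (hXm.const_mul _)) (hYm.const_mul _)
    have eC : ∫ ω, (1 + (Real.exp t - 1)*X ω) ∂μ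
        = (∫ _ω, (1:ℝ) ∂μ) + ∫ ω, (Real.exp t - 1)*X ω ∂μ :=
      integral_add (integrable_const 1) (hXm.const_mul _)
    rw [eA, eB, eC, integral_const_mul, integral_const_mul, integral_const_mul, integral_const]
    simp only [measure_univ, probReal_univ, ENNReal.toReal_one, smul_eq_mul, one_mul, ← hp, ← hq, ← hr]
  rw [hInt]
  -- facts about p, q, r
  have hrp : r ≤ p := by
    rw [hp, hr]
    apply integral_mono hXYm hXm
    intro ω
    rcases hXv ω with h|h <;> rcases hYv ω with h'|h' <;> norm_num [h, h']
  have hrq : r ≤ q := by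
    rw [hq, hr]
    apply integral_mono hXYm hYm
    intro ω
    rcases hXv ω with h|h <;> rcases hYv ω with h'|h' <;> norm_num [h, h']
  have hsum : p + q - 2*r ≤ 1 := by
    have h1 : ∫ ω, (X ω + Y ω - 2*(X ω * Y ω)) ∂μ ≤ ∫ _ω, (1:ℝ) ∂μ := by
      apply integral_mono ((hXm.add hYm).sub (hXYm.const_mul 2)) (integrable_const 1)
      intro ω
      rcases hXv ω with h|h <;> rcases hYv ω with h'|h' <;> norm_num [h, h']
    have e1 : ∫ ω, (X ω + Y ω - 2*(X ω * Y ω)) ∂μ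
        = (∫ ω, (X ω + Y ω) ∂μ) - ∫ ω, 2*(X ω*Y ω) ∂μ :=
      integral_sub (hXm.add hYm) (hXYm.const_mul 2)
    have e2 : ∫ ω, (X ω + Y ω) ∂μ = (∫ ω, X ω ∂μ) + ∫ ω, Y ω ∂μ := integral_add hXm hYm
    have e3' : ∫ ω, 2*(X ω*Y ω) ∂μ = 2 * ∫ ω, X ω*Y ω ∂μ := integral_const_mul 2 _
    have e4' : ∫ _ω, (1:ℝ) ∂μ = 1 := by simp
    rw [e1, e2, e3', e4'] at h1
    rw [hp, hq, hr]; linarith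
  have hk := keylem (p-r) (q-r) t (by linarith) (by linarith) (by linarith)
    (by linarith) ht
  have e3 : (p-r) + (q-r) = p + q - 2*r := by ring
  rw [e3] at hk
  have e4 : Real.exp (t*(q-p)) * (1 + (Real.exp t - 1)*p + (Real.exp (-t) - 1)*q
        + (2 - Real.exp t - Real.exp (-t))*r)
      = Real.exp (-(t*((p-r)-(q-r)))) * (1 - (p-r) - (q-r) + (p-r)*Real.exp t
        + (q-r)*Real.exp (-t)) := by
    rw [show -(t*((p-r)-(q-r))) = t*(q-p) by ring]
    ring
  rw [e4]
  convert hk using 4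
end

section
/- For w ≥ 3 and a ∈ [0, 1/10], the function T(w) = 4(w+1)(aw+1)·log(w+1) − 2aw(a(w+3)+w+1)·log(2/a) is nonnegative. -/
/-!
Write `s = a (w + 1)` and split `log (2 / a) = log (w + 1) + log (2 / s)`. The tangent-line bound
`log x ≤ x - 1` gives `s log (2 / s) ≤ 2 - s`, which absorbs the part of `log (2 / a)` that blows up
as `a → 0`. Since `a ≤ 1/10`, the coefficient of `log (2 / a)` is at most `12/5 · a (w + 1)²`, and what
remains is a linear comparison in `log (w + 1)`, which holds because `log (w + 1) ≥ log 4 > 6/5`.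
-/

open Real

lemma Real.mul_log_div_le_sub {x c : ℝ} (hx : 0 < x) (hc : 0 < c) :
    x * log (c / x) ≤ c - x := by
  have h := log_le_sub_one_of_pos (div_pos hc hx)
  calc x * log (c / x) ≤ x * (c / x - 1) := mul_le_mul_of_nonneg_left h hx.le
    _ = c - x := by field_simp

lemma mul_log_two_div_le {a t : ℝ} (ha : 0 < a) (ht : 0 < t) :
    a * t * log (2 / a) ≤ a * t * log t + 2 - a * t := by
  have hsplit : log (2 / a) = log t + log (2 / (a * t)) := by
    rw [← log_mul ht.ne' (by positivity)]
    congr 1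
    field_simp
  have h := Real.mul_log_div_le_sub (mul_pos ha ht) two_pos
  rw [hsplit]
  linarith

lemma six_fifths_le_log_add_one {w : ℝ} (hw : 3 ≤ w) : 6 / 5 ≤ log (w + 1) := by
  have h4 : log 4 ≤ log (w + 1) := log_le_log (by norm_num) (by linarith)
  have h42 : log 4 = 2 * log 2 := by
    rw [show (4 : ℝ) = 2 ^ 2 by norm_num, log_pow, Nat.cast_ofNat]
  linarith [log_two_gt_d9]

lemma coeff_le_of_le_one_tenth {a w : ℝ} (ha0 : 0 ≤ a) (ha1 : a ≤ 1 / 10) (hw : 0 ≤ w) :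
    2 * a * w * (a * (w + 3) + w + 1) ≤ 12 / 5 * a * (w + 1) ^ 2 := by
  have hinner : a * (w + 3) + w + 1 ≤ (11 * w + 13) / 10 := by nlinarith
  have hpoly : 2 * w * ((11 * w + 13) / 10) ≤ 12 / 5 * (w + 1) ^ 2 := by nlinarith
  calc 2 * a * w * (a * (w + 3) + w + 1) ≤ 2 * a * w * ((11 * w + 13) / 10) := by gcongr
    _ = a * (2 * w * ((11 * w + 13) / 10)) := by ring
    _ ≤ a * (12 / 5 * (w + 1) ^ 2) := by gcongr
    _ = 12 / 5 * a * (w + 1) ^ 2 := by ring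

/-- For w ≥ 3 and a ∈ [0, 1/10]:
4(w+1)(aw+1)log(w+1) − 2aw(a(w+3)+w+1)log(2/a) ≥ 0. -/
theorem stmt14 (a w : ℝ) (ha : a ∈ Set.Icc (0:ℝ) (1 / 10)) (hw : 3 ≤ w) :
    0 ≤ 4 * (w + 1) * (a * w + 1) * Real.log (w + 1) -
      2 * a * w * (a * (w + 3) + w + 1) * Real.log (2 / a) := by
  obtain ⟨ha0, ha1⟩ := ha
  have hL := six_fifths_le_log_add_one hw
  rcases ha0.eq_or_lt with rfl | ha0
  · nlinarith
  have hlog : 0 ≤ log (2 / a) := log_nonneg (by rw [le_div_iff₀ ha0]; linarith)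
  have hlin : 12 / 5 * (a * (w + 1) * log (w + 1) + 2 - a * (w + 1)) ≤
      4 * (a * w + 1) * log (w + 1) := by
    nlinarith [mul_le_mul_of_nonneg_left hL (mul_nonneg ha0.le (by linarith) : 0 ≤ a * (w - 3 / 2))]
  have hbound := calc
    2 * a * w * (a * (w + 3) + w + 1) * log (2 / a)
      ≤ 12 / 5 * a * (w + 1) ^ 2 * log (2 / a) :=
        mul_le_mul_of_nonneg_right (coeff_le_of_le_one_tenth ha0.le ha1 (by linarith)) hlog
    _ = (w + 1) * (12 / 5 * (a * (w + 1) * log (2 / a))) := by ring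
    _ ≤ (w + 1) * (12 / 5 * (a * (w + 1) * log (w + 1) + 2 - a * (w + 1))) := by
        gcongr
        exact mul_log_two_div_le ha0 (by linarith)
    _ ≤ (w + 1) * (4 * (a * w + 1) * log (w + 1)) := by gcongr
  linarith
end

section
/- Let N : (0,1] → ℕ satisfy ∫_0^1 √(log N(ε)) dε < ∞. Then ε·√(log N(ε)) → 0 as ε → 0⁺, and consequently for every c > 0, e^{−c/ε²}·N(ε) → 0 as ε → 0⁺. Moreover, if M(ε) := N(2·e^{−2/ε²}) for ε ≤ 2/√3, then the Dudley-type condition ∫_0^1 √(log M(ε)) dε < ∞ implies ε^c·N(ε) → 0 as ε → 0⁺ for every c > 0, and in particular ∫_0^1 N(ε) dε < ∞. -/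
open MeasureTheory Filter Set

/-- If `f` is antitone, nonnegative and integrable on `(0,1]`, then `ε * f ε → 0`
as `ε → 0⁺`. -/
lemma stmt19_aux (f : ℝ → ℝ) (hf : AntitoneOn f (Set.Ioc 0 1))
    (h0 : ∀ ε ∈ Set.Ioc (0:ℝ) 1, 0 ≤ f ε)
    (hint : IntegrableOn f (Set.Ioc 0 1)) :
    Tendsto (fun ε => ε * f ε) (nhdsWithin 0 (Set.Ioi 0)) (nhds 0) := by
  have hae : 0 ≤ᵐ[(volume : Measure ℝ).restrict (Set.Ioc 0 1)] f :=
    (ae_restrict_iff' measurableSet_Ioc).2 (ae_of_all _ (fun x hx => h0 x hx))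
  have hF : Tendsto (fun ε => ∫ t in Set.Ioc (0:ℝ) ε, f t
      ∂((volume : Measure ℝ).restrict (Set.Ioc 0 1))) (nhdsWithin 0 (Set.Ioi 0))
      (nhds 0) := by
    apply hint.tendsto_setIntegral_nhds_zero
    have hb : Tendsto (fun ε : ℝ => ENNReal.ofReal ε) (nhdsWithin 0 (Set.Ioi 0)) (nhds 0) := by
      rw [← ENNReal.ofReal_zero]
      exact (ENNReal.continuous_ofReal.tendsto 0).comp nhdsWithin_le_nhds
    apply tendsto_of_tendsto_of_tendsto_of_le_of_le tendsto_const_nhds hb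
    · intro x; exact zero_le
    · intro x
      calc ((volume : Measure ℝ).restrict (Set.Ioc 0 1)) (Set.Ioc 0 x)
          ≤ volume (Set.Ioc (0:ℝ) x) := Measure.restrict_apply_le _ _
        _ = ENNReal.ofReal x := by rw [Real.volume_Ioc, sub_zero]
  have hsq : ∀ ε ∈ Set.Ioc (0:ℝ) 1, ε * f ε ≤ 2 * ∫ t in Set.Ioc (0:ℝ) ε, f t
      ∂((volume : Measure ℝ).restrict (Set.Ioc 0 1)) := by
    intro ε hε
    have hε2 : Set.Ioc (ε/2) ε ⊆ Set.Ioc (0:ℝ) 1 := fun x hx =>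
      ⟨lt_trans (by linarith [hε.1]) hx.1, le_trans hx.2 hε.2⟩
    have hi1 : IntegrableOn f (Set.Ioc (ε/2) ε)
        ((volume : Measure ℝ).restrict (Set.Ioc 0 1)) := by
      rw [IntegrableOn, Measure.restrict_restrict measurableSet_Ioc,
        Set.inter_eq_self_of_subset_left hε2]
      exact hint.mono_set hε2
    have step1 : (ε/2) * f ε ≤ ∫ t in Set.Ioc (ε/2) ε, f t
        ∂((volume : Measure ℝ).restrict (Set.Ioc 0 1)) := by
      have hmono := setIntegral_mono_on (integrableOn_const
        (lt_of_le_of_lt (Measure.restrict_apply_le _ _) measure_Ioc_lt_top).ne)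
        hi1 measurableSet_Ioc
        (fun x hx => hf (hε2 hx) hε hx.2)
      calc (ε/2) * f ε
          = (((volume : Measure ℝ).restrict (Set.Ioc 0 1)) (Set.Ioc (ε/2) ε)).toReal • f ε := by
            rw [Measure.restrict_apply measurableSet_Ioc,
              Set.inter_eq_self_of_subset_left hε2, Real.volume_Ioc, smul_eq_mul,
              ENNReal.toReal_ofReal (by linarith [hε.1])]
            ring_nf
        _ = ∫ _ in Set.Ioc (ε/2) ε, f ε ∂((volume : Measure ℝ).restrict (Set.Ioc 0 1)) :=
            (setIntegral_const _).symm
        _ ≤ _ := hmono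
    have step2 : (∫ t in Set.Ioc (ε/2) ε, f t ∂((volume : Measure ℝ).restrict (Set.Ioc 0 1)))
        ≤ ∫ t in Set.Ioc (0:ℝ) ε, f t ∂((volume : Measure ℝ).restrict (Set.Ioc 0 1)) := by
      apply setIntegral_mono_set
      · rw [IntegrableOn, Measure.restrict_restrict measurableSet_Ioc]
        exact hint.mono_set Set.inter_subset_right
      · exact hae.filter_mono (ae_mono Measure.restrict_le_self)
      · exact HasSubset.Subset.eventuallyLE (Set.Ioc_subset_Ioc_left (by linarith [hε.1]))
    linarith
  have hpos : ∀ᶠ ε in nhdsWithin (0:ℝ) (Set.Ioi 0), ε ∈ Set.Ioc (0:ℝ) 1 := by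
    filter_upwards [Ioo_mem_nhdsGT one_pos] with x hx
    exact ⟨hx.1, hx.2.le⟩
  have h2F := hF.const_mul 2
  rw [mul_zero] at h2F
  refine squeeze_zero' ?_ ?_ h2F
  · filter_upwards [hpos] with ε hε
    exact mul_nonneg hε.1.le (h0 ε hε)
  · filter_upwards [hpos] with ε hε
    exact hsq ε hε

/-- Consequences of the Dudley-type entropy conditions for a non-increasing
covering-number function N ≥ 1. -/
theorem stmt19 (N : ℝ → ℝ)
    (hanti : AntitoneOn N (Set.Ioc 0 1))
    (hone : ∀ ε ∈ Set.Ioc (0:ℝ) 1, 1 ≤ N ε) :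
    (IntegrableOn (fun ε => Real.sqrt (Real.log (N ε))) (Set.Ioc 0 1) →
      (Tendsto (fun ε => ε * Real.sqrt (Real.log (N ε))) (nhdsWithin 0 (Set.Ioi 0)) (nhds 0) ∧
        ∀ c : ℝ, 0 < c →
          Tendsto (fun ε => Real.exp (-c / ε ^ 2) * N ε) (nhdsWithin 0 (Set.Ioi 0)) (nhds 0))) ∧
    (IntegrableOn
        (fun ε => Real.sqrt (Real.log (N (2 * Real.exp (-2 / ε ^ 2))))) (Set.Ioc 0 1) →
      ((∀ c : ℝ, 0 < c →
          Tendsto (fun ε => ε ^ c * N ε) (nhdsWithin 0 (Set.Ioi 0)) (nhds 0)) ∧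
        IntegrableOn N (Set.Ioc 0 1))) := by
  have hsq0 : Tendsto (fun ε : ℝ => ε ^ 2) (nhdsWithin 0 (Set.Ioi 0))
      (nhdsWithin 0 (Set.Ioi 0)) := by
    apply tendsto_nhdsWithin_of_tendsto_nhds_of_eventually_within
    · simpa using (((continuous_pow 2).tendsto (0:ℝ)).mono_left nhdsWithin_le_nhds)
    · filter_upwards [self_mem_nhdsWithin] with x hx
      exact pow_pos (Set.mem_Ioi.mp hx) 2
  constructor
  · -- Part 1
    intro hint
    have hanti1 : AntitoneOn (fun ε => Real.sqrt (Real.log (N ε))) (Set.Ioc 0 1) := by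
      intro x hx y hy hxy
      exact Real.sqrt_le_sqrt (Real.log_le_log (by linarith [hone y hy]) (hanti hx hy hxy))
    have key := stmt19_aux _ hanti1 (fun ε _ => Real.sqrt_nonneg _) hint
    refine ⟨key, ?_⟩
    intro c hc
    have hhalf : 0 < c / 2 := by linarith
    have hdiv : Tendsto (fun ε : ℝ => (c/2) / ε ^ 2) (nhdsWithin 0 (Set.Ioi 0)) atTop := by
      simpa [div_eq_mul_inv] using
        Tendsto.const_mul_atTop hhalf (tendsto_inv_nhdsGT_zero.comp hsq0)
    have hexp : Tendsto (fun ε : ℝ => Real.exp (-((c/2) / ε ^ 2)))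
        (nhdsWithin 0 (Set.Ioi 0)) (nhds 0) :=
      Real.tendsto_exp_atBot.comp (tendsto_neg_atTop_atBot.comp hdiv)
    refine squeeze_zero' ?_ ?_ hexp
    · filter_upwards [Ioo_mem_nhdsGT one_pos] with ε hε
      exact mul_nonneg (Real.exp_pos _).le (by linarith [hone ε ⟨hε.1, hε.2.le⟩])
    · filter_upwards [Ioo_mem_nhdsGT one_pos,
        key.eventually_lt_const (Real.sqrt_pos.2 hhalf)] with ε hε hlt
      have hN1 : 1 ≤ N ε := hone ε ⟨hε.1, hε.2.le⟩
      have hL : 0 ≤ Real.log (N ε) := Real.log_nonneg hN1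
      have hsq : (ε * Real.sqrt (Real.log (N ε))) ^ 2 < Real.sqrt (c/2) ^ 2 :=
        pow_lt_pow_left₀ hlt (mul_nonneg hε.1.le (Real.sqrt_nonneg _)) (by norm_num)
      rw [mul_pow, Real.sq_sqrt hL, Real.sq_sqrt hhalf.le] at hsq
      have hlog : Real.log (N ε) < (c/2) / ε ^ 2 := by
        rw [lt_div_iff₀ (pow_pos hε.1 2)]
        linarith
      calc Real.exp (-c / ε ^ 2) * N ε
          = Real.exp (-c / ε ^ 2 + Real.log (N ε)) := by
            rw [Real.exp_add, Real.exp_log (by linarith)]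
        _ ≤ Real.exp (-((c/2) / ε ^ 2)) := by
            apply Real.exp_le_exp.2
            have : -c / ε ^ 2 + (c/2) / ε ^ 2 = -((c/2) / ε ^ 2) := by ring
            linarith
  · -- Part 2
    intro hint
    -- the reparametrized covering function and its properties
    have hφmem : ∀ ε ∈ Set.Ioc (0:ℝ) 1, (2 * Real.exp (-2 / ε ^ 2)) ∈ Set.Ioc (0:ℝ) 1 := by
      intro ε hε
      constructor
      · positivity
      · have h1 : ε ^ 2 ≤ 1 := by nlinarith [hε.1, hε.2]
        have h2 : (2:ℝ) ≤ 2 / ε ^ 2 := by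
          rw [le_div_iff₀ (pow_pos hε.1 2)]
          nlinarith
        have h3 : Real.exp (-2 / ε ^ 2) ≤ Real.exp (-2) := by
          apply Real.exp_le_exp.2
          rw [neg_div]
          linarith
        have h4 : Real.exp (-2:ℝ) ≤ 1/2 := by
          have h5 : (2:ℝ) ≤ Real.exp 2 := by nlinarith [Real.add_one_le_exp (2:ℝ)]
          rw [Real.exp_neg]
          rw [inv_le_comm₀ (Real.exp_pos _) (by norm_num)]
          simpa using h5
        linarith
    have hφmono : ∀ x ∈ Set.Ioc (0:ℝ) 1, ∀ y ∈ Set.Ioc (0:ℝ) 1, x ≤ y →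
        (2 * Real.exp (-2 / x ^ 2)) ≤ 2 * Real.exp (-2 / y ^ 2) := by
      intro x hx y hy hxy
      have h1 : x ^ 2 ≤ y ^ 2 := by nlinarith [hx.1]
      have h2 : 2 / y ^ 2 ≤ 2 / x ^ 2 :=
        div_le_div_of_nonneg_left (by norm_num) (pow_pos hx.1 2) h1
      have h3 : -2 / x ^ 2 ≤ -2 / y ^ 2 := by
        rw [neg_div, neg_div]
        linarith
      have := Real.exp_le_exp.2 h3
      linarith
    have hManti : AntitoneOn (fun ε => Real.sqrt (Real.log (N (2 * Real.exp (-2 / ε ^ 2)))))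
        (Set.Ioc 0 1) := by
      intro x hx y hy hxy
      apply Real.sqrt_le_sqrt
      apply Real.log_le_log (by linarith [hone _ (hφmem y hy)])
      exact hanti (hφmem x hx) (hφmem y hy) (hφmono x hx y hy hxy)
    have keyM := stmt19_aux _ hManti (fun ε _ => Real.sqrt_nonneg _) hint
    -- reparametrize back
    set ψ : ℝ → ℝ := fun u => Real.sqrt (2 / Real.log (2 / u)) with hψdef
    have hlogtop : Tendsto (fun u : ℝ => Real.log (2 / u)) (nhdsWithin 0 (Set.Ioi 0)) atTop := by
      apply Real.tendsto_log_atTop.comp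
      have hi : Tendsto (fun u : ℝ => u⁻¹) (nhdsWithin 0 (Set.Ioi 0)) atTop :=
        tendsto_inv_nhdsGT_zero
      exact (Tendsto.const_mul_atTop two_pos hi).congr (fun u => (div_eq_mul_inv 2 u).symm)
    have hψ0 : Tendsto ψ (nhdsWithin 0 (Set.Ioi 0)) (nhds 0) := by
      have := (tendsto_const_nhds.div_atTop hlogtop : Tendsto (fun u : ℝ => 2 / Real.log (2/u))
        (nhdsWithin 0 (Set.Ioi 0)) (nhds 0)).sqrt
      simpa only [Real.sqrt_zero] using this
    have hLpos : ∀ u : ℝ, u ∈ Set.Ioo (0:ℝ) 1 → 0 < Real.log (2 / u) := by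
      intro u hu
      apply Real.log_pos
      rw [lt_div_iff₀ hu.1]
      linarith [hu.2]
    have hψpos : ∀ᶠ u in nhdsWithin (0:ℝ) (Set.Ioi 0), ψ u ∈ Set.Ioi (0:ℝ) := by
      filter_upwards [Ioo_mem_nhdsGT one_pos] with u hu
      exact Real.sqrt_pos.2 (div_pos two_pos (hLpos u hu))
    have hψ : Tendsto ψ (nhdsWithin 0 (Set.Ioi 0)) (nhdsWithin 0 (Set.Ioi 0)) :=
      tendsto_nhdsWithin_of_tendsto_nhds_of_eventually_within _ hψ0 hψpos
    have hψsq : ∀ u ∈ Set.Ioo (0:ℝ) 1, ψ u ^ 2 = 2 / Real.log (2 / u) := fun u hu =>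
      Real.sq_sqrt (div_pos two_pos (hLpos u hu)).le
    have hfix : ∀ u ∈ Set.Ioo (0:ℝ) 1, 2 * Real.exp (-2 / ψ u ^ 2) = u := by
      intro u hu
      have hL := hLpos u hu
      rw [hψsq u hu]
      have h1 : -2 / (2 / Real.log (2 / u)) = -Real.log (2 / u) := by
        field_simp
      rw [h1, Real.exp_neg, Real.exp_log (div_pos two_pos hu.1)]
      field_simp
    have h2 : Tendsto (fun u => ψ u * Real.sqrt (Real.log (N u)))
        (nhdsWithin 0 (Set.Ioi 0)) (nhds 0) := by
      apply (keyM.comp hψ).congr'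
      filter_upwards [Ioo_mem_nhdsGT one_pos] with u hu
      simp only [Function.comp]
      rw [hfix u hu]
    -- power decay
    have hconc : ∀ c : ℝ, 0 < c →
        Tendsto (fun ε => ε ^ c * N ε) (nhdsWithin 0 (Set.Ioi 0)) (nhds 0) := by
      intro c hc
      have hbound : Tendsto (fun u : ℝ => Real.exp ((c/2) * Real.log u + (c/2) * Real.log 2))
          (nhdsWithin 0 (Set.Ioi 0)) (nhds 0) := by
        apply Real.tendsto_exp_atBot.comp
        apply tendsto_atBot_add_const_right
        exact Tendsto.const_mul_atBot (by linarith) Real.tendsto_log_nhdsGT_zero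
      refine squeeze_zero' ?_ ?_ hbound
      · filter_upwards [Ioo_mem_nhdsGT one_pos] with u hu
        exact mul_nonneg (Real.rpow_nonneg hu.1.le _) (by linarith [hone u ⟨hu.1, hu.2.le⟩])
      · filter_upwards [Ioo_mem_nhdsGT one_pos,
          h2.eventually_lt_const (Real.sqrt_pos.2 hc)] with u hu hlt
        have hL := hLpos u hu
        have hN1 : 1 ≤ N u := hone u ⟨hu.1, hu.2.le⟩
        have hlogN : 0 ≤ Real.log (N u) := Real.log_nonneg hN1
        have hsq : (ψ u * Real.sqrt (Real.log (N u))) ^ 2 < Real.sqrt c ^ 2 :=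
          pow_lt_pow_left₀ hlt (mul_nonneg (Real.sqrt_nonneg _) (Real.sqrt_nonneg _))
            (by norm_num)
        rw [mul_pow, Real.sq_sqrt hlogN, Real.sq_sqrt hc.le, hψsq u hu] at hsq
        have hX : 2 * Real.log (N u) < c * Real.log (2 / u) := by
          rw [div_mul_eq_mul_div, div_lt_iff₀ hL] at hsq
          linarith
        have hlogdiv : Real.log (2 / u) = Real.log 2 - Real.log u :=
          Real.log_div two_ne_zero (ne_of_gt hu.1)
        calc u ^ c * N u = Real.exp (Real.log u * c + Real.log (N u)) := by
              rw [Real.exp_add, Real.exp_log (by linarith), Real.rpow_def_of_pos hu.1]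
          _ ≤ Real.exp ((c/2) * Real.log u + (c/2) * Real.log 2) := by
              apply Real.exp_le_exp.2
              rw [hlogdiv] at hX
              nlinarith [hX]
    refine ⟨hconc, ?_⟩
    -- integrability of N
    have hT := hconc ((1:ℝ)/2) (by norm_num)
    obtain ⟨a, (ha : 0 < a), hsub⟩ := mem_nhdsGT_iff_exists_Ioc_subset.mp
      (hT.eventually_lt_const one_pos)
    set b := min a 1 with hbdef
    have hb0 : 0 < b := lt_min ha one_pos
    have hb1 : b ≤ 1 := min_le_right _ _
    have hmeas : AEMeasurable N ((volume : Measure ℝ).restrict (Set.Ioc 0 1)) :=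
      aemeasurable_restrict_of_antitoneOn measurableSet_Ioc hanti
    have hI1 : IntegrableOn N (Set.Ioc 0 b) := by
      apply Integrable.mono' (g := fun u : ℝ => u ^ (-(1/2) : ℝ))
      · exact (intervalIntegrable_iff_integrableOn_Ioc_of_le hb0.le).1
          (intervalIntegral.intervalIntegrable_rpow' (by norm_num))
      · exact (hmeas.mono_measure
          (Measure.restrict_mono (Set.Ioc_subset_Ioc_right hb1) le_rfl)).aestronglyMeasurable
      · rw [ae_restrict_iff' measurableSet_Ioc]
        apply ae_of_all
        intro u hu
        have hu1 : u ∈ Set.Ioc (0:ℝ) 1 := ⟨hu.1, le_trans hu.2 hb1⟩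
        have hlt : u ^ ((1:ℝ)/2) * N u < 1 := hsub ⟨hu.1, le_trans hu.2 (min_le_left _ _)⟩
        have hpos : (0:ℝ) < u ^ ((1:ℝ)/2) := Real.rpow_pos_of_pos hu.1 _
        have hN0 : 0 ≤ N u := by linarith [hone u hu1]
        rw [Real.norm_eq_abs, abs_of_nonneg hN0, Real.rpow_neg hu.1.le, ← one_div]
        rw [le_div_iff₀ hpos, mul_comm]
        exact hlt.le
    have hI2 : IntegrableOn N (Set.Ioc b 1) := by
      apply Integrable.mono' (g := fun _ : ℝ => N b)
      · exact integrableOn_const measure_Ioc_lt_top.ne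
      · exact (hmeas.mono_measure
          (Measure.restrict_mono (Set.Ioc_subset_Ioc_left hb0.le) le_rfl)).aestronglyMeasurable
      · rw [ae_restrict_iff' measurableSet_Ioc]
        apply ae_of_all
        intro u hu
        have hu1 : u ∈ Set.Ioc (0:ℝ) 1 := ⟨lt_trans hb0 hu.1, hu.2⟩
        rw [Real.norm_eq_abs, abs_of_nonneg (by linarith [hone u hu1])]
        exact hanti ⟨hb0, hb1⟩ hu1 hu.1.le
    rw [← Set.Ioc_union_Ioc_eq_Ioc hb0.le hb1]
    exact hI1.union hI2
end
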